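/- arXiv:1701.09154 — 3 statements merged into one kernel-verified Lean document; each statement's English description precedes it below -/
import Mathlib

section
/- Let K ⊆ K' be a field extension, M ⊆ K[x₁,…,xₙ]^p a finitely generated K[x]-submodule with generators w₁,…,w_r, and let J₁,…,J_p be subsets of {1,…,n}. If û = Σⱼ wⱼ v̂ⱼ for some polynomials v̂ⱼ ∈ K'[x] and each component ûᵢ involves only the variables indexed by Jᵢ, then there exist polynomials vⱼ ∈ K[x] such that u = Σⱼ wⱼ vⱼ has each component uᵢ involving only the variables indexed by Jᵢ, and min over i of ord(uᵢ) equals min over i of ord(ûᵢ). -/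
/-- The order of a multivariate power series: the least total degree of a monomial
with nonzero coefficient (⊤ if the series is zero). -/
noncomputable def mvOrder {σ K : Type*} [CommSemiring K] (f : MvPowerSeries σ K) : ℕ∞ :=
  sInf {d : ℕ∞ | ∃ m : σ →₀ ℕ, MvPowerSeries.coeff m f ≠ 0 ∧ ((m.sum fun _ e => e : ℕ) : ℕ∞) = d}

/-- The order of a multivariate polynomial: the least total degree of a monomial
with nonzero coefficient (⊤ if the polynomial is zero). -/
noncomputable def polyOrd {σ K : Type*} [CommSemiring K] (f : MvPolynomial σ K) : ℕ∞ :=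
  sInf {d : ℕ∞ | ∃ m ∈ f.support, ((m.sum fun _ e => e : ℕ) : ℕ∞) = d}

/-- A ring morphism is algebraically pure if every finite system of polynomial
equations over the source having a solution in the target has a solution in the source. -/
def IsAlgPure {A B : Type*} [CommRing A] [CommRing B] (u : A →+* B) : Prop :=
  ∀ (q p : ℕ) (F : Fin q → MvPolynomial (Fin p) A),
    (∃ y : Fin p → B, ∀ j, MvPolynomial.eval₂ u y (F j) = 0) →
    ∃ x : Fin p → A, ∀ j, MvPolynomial.eval x (F j) = 0

/-- The canonical map from polynomials over `F` to power series over `K'`,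
given a coefficient map `φ : F →+* K'`. -/
noncomputable def polyToPS {σ F K' : Type*} [CommSemiring F] [CommSemiring K'] (φ : F →+* K') :
    MvPolynomial σ F →+* MvPowerSeries σ K' :=
  (MvPolynomial.coeToMvPowerSeries.ringHom).comp (MvPolynomial.map φ)

/-- Membership in (the image in `K'[[x]]` of) the localization `F[x_J]_{(x_J)}`:
`y` is a ratio `P/Q` of polynomials over `F` in the variables indexed by `J`,
with `Q` having nonzero constant term. -/
def LocMem {n : ℕ} {F K' : Type*} [Field F] [Field K'] (φ : F →+* K') (J : Set (Fin n))
    (y : MvPowerSeries (Fin n) K') : Prop :=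
  ∃ P Q : MvPolynomial (Fin n) F,
    (∀ m ∈ P.support, ∀ i, m i ≠ 0 → i ∈ J) ∧
    (∀ m ∈ Q.support, ∀ i, m i ≠ 0 → i ∈ J) ∧
    MvPolynomial.coeff 0 Q ≠ 0 ∧
    polyToPS φ Q * y = polyToPS φ P

/-- Membership in (the image in `K'[[x]]` of) the ring `F⟨x_J⟩` of algebraic power series
over `F` in the variables indexed by `J`: the coefficients of `y` come from `F` (via `φ`),
`y` only involves the variables indexed by `J`, and `y` is algebraic over `F[x_J]`. -/
def AlgPSMem {n : ℕ} {F K' : Type*} [Field F] [Field K'] (φ : F →+* K') (J : Set (Fin n))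
    (y : MvPowerSeries (Fin n) K') : Prop :=
  (∀ m : Fin n →₀ ℕ, MvPowerSeries.coeff m y ∈ Set.range φ) ∧
  (∀ m : Fin n →₀ ℕ, MvPowerSeries.coeff m y ≠ 0 → ∀ i, m i ≠ 0 → i ∈ J) ∧
  ∃ p : Polynomial (MvPolynomial (Fin n) F), p ≠ 0 ∧
    (∀ k, ∀ m ∈ (p.coeff k).support, ∀ i, m i ≠ 0 → i ∈ J) ∧
    Polynomial.eval₂ (polyToPS φ) y p = 0

open MvPolynomial

lemma coeff_lamPoly {n : ℕ} {K K' : Type*} [Field K] [Field K'] [Algebra K K']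
    (lam : K' →ₗ[K] K) (f : MvPolynomial (Fin n) K') (m : Fin n →₀ ℕ) :
    MvPolynomial.coeff m (∑ a ∈ f.support, MvPolynomial.monomial a (lam (MvPolynomial.coeff a f)))
      = lam (MvPolynomial.coeff m f) := by
  rw [MvPolynomial.coeff_sum]
  simp only [MvPolynomial.coeff_monomial]
  rw [Finset.sum_ite_eq' f.support m (fun a => lam (MvPolynomial.coeff a f))]
  by_cases hm : m ∈ f.support
  · rw [if_pos hm]
  · rw [if_neg hm, MvPolynomial.notMem_support_iff.mp hm, map_zero]

lemma coeff_lamPoly_mul {n : ℕ} {K K' : Type*} [Field K] [Field K'] [Algebra K K']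
    (lam : K' →ₗ[K] K) (q : MvPolynomial (Fin n) K') (wp : MvPolynomial (Fin n) K)
    (m : Fin n →₀ ℕ) :
    MvPolynomial.coeff m
        ((∑ a ∈ q.support, MvPolynomial.monomial a (lam (MvPolynomial.coeff a q))) * wp)
      = lam (MvPolynomial.coeff m (q * MvPolynomial.map (algebraMap K K') wp)) := by
  rw [MvPolynomial.coeff_mul, MvPolynomial.coeff_mul, map_sum]
  refine Finset.sum_congr rfl fun x hx => ?_
  rw [coeff_lamPoly, MvPolynomial.coeff_map]
  rw [mul_comm (MvPolynomial.coeff x.1 q), ← Algebra.smul_def, map_smul, smul_eq_mul, mul_comm]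

lemma polyOrd_zero {σ R : Type*} [CommSemiring R] : polyOrd (0 : MvPolynomial σ R) = ⊤ := by
  unfold polyOrd
  simp [sInf_eq_top]

theorem stmt0 {n p r : ℕ} {K K' : Type*} [Field K] [Field K'] [Algebra K K']
    (M : Submodule (MvPolynomial (Fin n) K) (Fin p → MvPolynomial (Fin n) K))
    (w : Fin r → Fin p → MvPolynomial (Fin n) K)
    (hM : Submodule.span (MvPolynomial (Fin n) K) (Set.range w) = M)
    (J : Fin p → Set (Fin n))
    (vh : Fin r → MvPolynomial (Fin n) K')
    (uh : Fin p → MvPolynomial (Fin n) K')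
    (huh : ∀ i, uh i = ∑ j, vh j * (MvPolynomial.map (algebraMap K K')) (w j i))
    (hsupp : ∀ i, ∀ m ∈ (uh i).support, ∀ l, m l ≠ 0 → l ∈ J i) :
    ∃ v : Fin r → MvPolynomial (Fin n) K,
      (fun i => ∑ j, v j * w j i) ∈ M ∧
      (∀ i, ∀ m ∈ (∑ j, v j * w j i).support, ∀ l, m l ≠ 0 → l ∈ J i) ∧
      (⨅ i, polyOrd (∑ j, v j * w j i)) = ⨅ i, polyOrd (uh i) := by

  classical
  by_cases hzero : ∀ i, uh i = 0
  · refine ⟨0, ?_, ?_, ?_⟩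
    · have : (fun i => ∑ j, (0 : Fin r → MvPolynomial (Fin n) K) j * w j i) = 0 := by
        funext i; simp
      rw [this]; exact M.zero_mem
    · intro i m hm; simp at hm
    · refine iInf_congr fun i => ?_
      rw [hzero i]
      simp only [Pi.zero_apply, zero_mul, Finset.sum_const_zero]
      rw [polyOrd_zero, polyOrd_zero]
  · push_neg at hzero
    obtain ⟨i₁, hi₁⟩ := hzero
    have : Nonempty (Fin p) := ⟨i₁⟩
    obtain ⟨i₀, hi₀⟩ := Finite.exists_min (fun i => polyOrd (uh i))
    -- the infimum is attained at i₀
    have hinf : (⨅ i, polyOrd (uh i)) = polyOrd (uh i₀) :=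
      le_antisymm (iInf_le _ i₀) (le_iInf hi₀)
    -- polyOrd (uh i₁) < ⊤
    have hord1 : polyOrd (uh i₁) < ⊤ := by
      obtain ⟨m, hm⟩ := (MvPolynomial.support_nonempty.mpr hi₁)
      calc polyOrd (uh i₁) ≤ ((m.sum fun _ e => e : ℕ) : ℕ∞) := sInf_le ⟨m, hm, rfl⟩
        _ < ⊤ := WithTop.coe_lt_top _
    have hne0 : uh i₀ ≠ 0 := by
      intro h
      have : polyOrd (uh i₀) = ⊤ := by
        unfold polyOrd
        rw [h]
        simp [sInf_eq_top]
      exact absurd (lt_of_le_of_lt (hi₀ i₁) hord1) (by rw [this]; exact lt_irrefl ⊤)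
    -- attainment of sInf: the defining set is finite and nonempty
    have hmem : polyOrd (uh i₀) ∈
        {d : ℕ∞ | ∃ m ∈ (uh i₀).support, ((m.sum fun _ e => e : ℕ) : ℕ∞) = d} := by
      apply Set.Nonempty.csInf_mem
      · obtain ⟨m, hm⟩ := (MvPolynomial.support_nonempty.mpr hne0)
        exact ⟨_, m, hm, rfl⟩
      · have : {d : ℕ∞ | ∃ m ∈ (uh i₀).support, ((m.sum fun _ e => e : ℕ) : ℕ∞) = d}
            = (fun m : Fin n →₀ ℕ => ((m.sum fun _ e => e : ℕ) : ℕ∞)) '' ↑(uh i₀).support := by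
          ext d; simp [Set.mem_image]
        rw [this]
        exact ((uh i₀).support.finite_toSet).image _
    obtain ⟨m₀, hm₀supp, hm₀deg⟩ := hmem
    have hc₀ : MvPolynomial.coeff m₀ (uh i₀) ≠ 0 :=
      MvPolynomial.mem_support_iff.mp hm₀supp
    obtain ⟨lam, hlam⟩ : ∃ lam : Module.Dual K K', lam (MvPolynomial.coeff m₀ (uh i₀)) ≠ 0 := by
      by_contra h
      push_neg at h
      exact hc₀ ((Module.forall_dual_apply_eq_zero_iff K _).mp h)
    set v : Fin r → MvPolynomial (Fin n) K :=
      fun j => ∑ a ∈ (vh j).support, MvPolynomial.monomial a (lam (MvPolynomial.coeff a (vh j)))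
      with hv
    have key : ∀ i m, MvPolynomial.coeff m (∑ j, v j * w j i)
        = lam (MvPolynomial.coeff m (uh i)) := by
      intro i m
      rw [huh i, MvPolynomial.coeff_sum, MvPolynomial.coeff_sum, map_sum]
      exact Finset.sum_congr rfl fun j _ => coeff_lamPoly_mul lam (vh j) (w j i) m
    have hsub : ∀ i, (∑ j, v j * w j i).support ⊆ (uh i).support := by
      intro i m hm
      rw [MvPolynomial.mem_support_iff] at hm ⊢
      intro h
      rw [key i m, h, map_zero] at hm
      exact hm rfl
    refine ⟨v, ?_, ?_, ?_⟩
    · rw [← hM]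
      have : (fun i => ∑ j, v j * w j i) = ∑ j, v j • w j := by
        funext i
        rw [Finset.sum_apply]
        rfl
      rw [this]
      exact Submodule.sum_mem _ fun j _ =>
        Submodule.smul_mem _ _ (Submodule.subset_span ⟨j, rfl⟩)
    · intro i m hm
      exact hsupp i m (hsub i hm)
    · refine le_antisymm ?_ ?_
      · calc (⨅ i, polyOrd (∑ j, v j * w j i)) ≤ polyOrd (∑ j, v j * w j i₀) := iInf_le _ i₀
          _ ≤ ((m₀.sum fun _ e => e : ℕ) : ℕ∞) := by
              refine sInf_le ⟨m₀, ?_, rfl⟩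
              rw [MvPolynomial.mem_support_iff, key i₀ m₀]
              exact hlam
          _ = polyOrd (uh i₀) := hm₀deg
          _ = ⨅ i, polyOrd (uh i) := hinf.symm
      · refine le_iInf fun i => le_trans (iInf_le _ i) ?_
        refine sInf_le_sInf ?_
        rintro d ⟨m, hm, rfl⟩
        exact ⟨m, hsub i hm, rfl⟩
end

section
/- Let K → K' be an algebraically pure morphism of fields, x = (x₁,…,xₙ), J₁,…,J_p ⊆ {1,…,n}, and f a finite system of polynomials in K[x]_{(x)}[Y₁,…,Y_p]. If there is a solution ŷ of f = 0 with ŷᵢ ∈ K'[x_{Jᵢ}]_{(x_{Jᵢ})} for each i, then there is a solution y of f = 0 with yᵢ ∈ K[x_{Jᵢ}]_{(x_{Jᵢ})} and ord yᵢ = ord ŷᵢ for all i. -/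
lemma mvOrder_le {σ K : Type*} [CommSemiring K] {f : MvPowerSeries σ K} {m : σ →₀ ℕ}
    (h : MvPowerSeries.coeff m f ≠ 0) : mvOrder f ≤ ((m.sum fun _ e => e : ℕ) : ℕ∞) :=
  sInf_le ⟨m, h, rfl⟩

lemma mvOrder_eq_top_iff {σ K : Type*} [CommSemiring K] {f : MvPowerSeries σ K} :
    mvOrder f = ⊤ ↔ f = 0 := by
  constructor
  · intro h
    ext m
    by_contra hc
    have := mvOrder_le (f := f) (m := m) (by simpa using hc)
    rw [h] at this
    exact ENat.coe_ne_top _ (top_le_iff.mp this)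
  · intro h
    subst h
    have : {d : ℕ∞ | ∃ m : σ →₀ ℕ, MvPowerSeries.coeff m (0 : MvPowerSeries σ K) ≠ 0 ∧
        ((m.sum fun _ e => e : ℕ) : ℕ∞) = d} = ∅ := by
      ext d; simp
    rw [mvOrder, this, sInf_empty]

lemma mvOrder_exists {σ K : Type*} [CommSemiring K] {f : MvPowerSeries σ K} (h : f ≠ 0) :
    ∃ m : σ →₀ ℕ, MvPowerSeries.coeff m f ≠ 0 ∧ ((m.sum fun _ e => e : ℕ) : ℕ∞) = mvOrder f := by
  have hne : {d : ℕ∞ | ∃ m : σ →₀ ℕ, MvPowerSeries.coeff m f ≠ 0 ∧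
      ((m.sum fun _ e => e : ℕ) : ℕ∞) = d}.Nonempty := by
    have hm : ¬ ∀ m : σ →₀ ℕ, MvPowerSeries.coeff m f = 0 := fun hall =>
      h (MvPowerSeries.ext fun m => by simp [hall])
    push_neg at hm
    obtain ⟨m, hm⟩ := hm
    exact ⟨_, m, hm, rfl⟩
  have := csInf_mem hne
  obtain ⟨m, hm, hd⟩ := this
  exact ⟨m, hm, hd⟩

lemma mvOrder_le_mul {σ K : Type*} [CommSemiring K] (a f : MvPowerSeries σ K) :
    mvOrder f ≤ mvOrder (a * f) := by
  apply le_sInf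
  rintro d ⟨m, hm, rfl⟩
  classical
  rw [MvPowerSeries.coeff_mul] at hm
  obtain ⟨⟨m1, m2⟩, hmem, hne⟩ := Finset.exists_ne_zero_of_sum_ne_zero hm
  have h2 : MvPowerSeries.coeff m2 f ≠ 0 := fun h => hne (by simp [h])
  refine le_trans (mvOrder_le h2) ?_
  simp only [Finset.HasAntidiagonal.mem_antidiagonal] at hmem
  have : (m2.sum fun _ e => e) ≤ (m.sum fun _ e => e) := by
    subst hmem
    rw [Finsupp.sum_add_index (by simp) (by intros; rfl)]
    exact Nat.le_add_left _ _
  exact_mod_cast this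

lemma mvOrder_unit_mul {σ K : Type*} [Field K] {a : MvPowerSeries σ K}
    (ha : MvPowerSeries.constantCoeff a ≠ 0) (f : MvPowerSeries σ K) :
    mvOrder (a * f) = mvOrder f := by
  refine le_antisymm ?_ (mvOrder_le_mul a f)
  have := mvOrder_le_mul a⁻¹ (a * f)
  rwa [← mul_assoc, MvPowerSeries.inv_mul_cancel _ ha, one_mul] at this
lemma exists_finset_subset_span {R : Type*} [CommRing R] [IsNoetherianRing R] (S : Set R) :
    ∃ T : Finset R, ↑T ⊆ S ∧ S ⊆ (Ideal.span (T : Set R) : Set R) := by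
  classical
  obtain ⟨F, hF⟩ := (IsNoetherian.noetherian (Ideal.span S))
  choose t ht hmem using fun g (hg : (g : R) ∈ Submodule.span R S) =>
    Submodule.mem_span_finite_of_mem_span hg
  have hFS : ∀ g ∈ F, (g : R) ∈ Submodule.span R S := by
    intro g hg
    have : g ∈ Ideal.span S := by
      rw [← hF]; exact Submodule.subset_span hg
    exact this
  refine ⟨F.attach.biUnion (fun g => t g (hFS g g.2)), ?_, ?_⟩
  · intro x hx
    simp only [Finset.coe_biUnion, Set.mem_iUnion, Finset.mem_coe] at hx
    obtain ⟨g, hg, hx⟩ := hx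
    exact ht _ _ hx
  · intro s hs
    have hsub : Ideal.span S ≤ Ideal.span (↑(F.attach.biUnion fun g => t g (hFS g g.2)) : Set R) := by
      rw [← hF, show (Submodule.span R (↑F : Set R) : Submodule R R) = Ideal.span (↑F : Set R) from rfl, Ideal.span_le]
      intro g hg
      rw [Finset.mem_coe] at hg
      have := hmem g (hFS g hg)
      refine Submodule.span_mono ?_ this
      intro x hx
      simp only [Finset.coe_biUnion, Set.mem_iUnion, Finset.mem_coe]
      exact ⟨⟨g, hg⟩, Finset.mem_attach _ _, hx⟩
    exact hsub (Ideal.subset_span hs)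


open MvPolynomial in
lemma mvOrder_eq_of {σ K : Type*} [CommSemiring K] {f : MvPowerSeries σ K} {c : ℕ∞}
    (h1 : ∃ m : σ →₀ ℕ, MvPowerSeries.coeff m f ≠ 0 ∧ ((m.sum fun _ e => e : ℕ) : ℕ∞) = c)
    (h2 : ∀ m : σ →₀ ℕ, MvPowerSeries.coeff m f ≠ 0 → c ≤ ((m.sum fun _ e => e : ℕ) : ℕ∞)) :
    mvOrder f = c := by
  obtain ⟨m, hm, hd⟩ := h1
  refine le_antisymm (hd ▸ mvOrder_le hm) (le_sInf ?_)
  rintro d ⟨m', hm', rfl⟩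
  exact h2 m' hm'


open MvPolynomial in
lemma coeff_sum_monomial_attach_mem {σ R : Type*} [CommSemiring R] (s : Finset (σ →₀ ℕ))
    (c : {m // m ∈ s} → R) (μ : σ →₀ ℕ) (hμ : μ ∈ s) :
    coeff μ (∑ m ∈ s.attach, monomial m.1 (c m)) = c ⟨μ, hμ⟩ := by
  classical
  rw [coeff_sum]
  rw [Finset.sum_eq_single (⟨μ, hμ⟩ : {m // m ∈ s})]
  · simp [coeff_monomial]
  · rintro ⟨b, hb⟩ - hne
    rw [coeff_monomial, if_neg]
    intro h; exact hne (Subtype.ext (by simpa using h))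
  · intro h; exact absurd (Finset.mem_attach _ _) h

open MvPolynomial in
lemma coeff_sum_monomial_attach_not_mem {σ R : Type*} [CommSemiring R] (s : Finset (σ →₀ ℕ))
    (c : {m // m ∈ s} → R) (μ : σ →₀ ℕ) (hμ : μ ∉ s) :
    coeff μ (∑ m ∈ s.attach, monomial m.1 (c m)) = 0 := by
  classical
  rw [coeff_sum]
  apply Finset.sum_eq_zero
  rintro ⟨b, hb⟩ -
  rw [coeff_monomial, if_neg]
  rintro rfl; exact hμ hb

open MvPolynomial MvPowerSeries in
/-- The key power series computation used on both sides. -/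
lemma key_ps_identity {n p : ℕ} {K' : Type*} [CommRing K']
    (g : MvPolynomial (Fin p) (MvPowerSeries (Fin n) K'))
    (a b : (Fin p →₀ ℕ) → MvPowerSeries (Fin n) K')
    (pps qps yy : Fin p → MvPowerSeries (Fin n) K')
    (hab : ∀ m ∈ g.support, b m * MvPolynomial.coeff m g = a m)
    (hqy : ∀ i, qps i * yy i = pps i)
    (d : ℕ) (hd : ∀ m ∈ g.support, ∀ i, m i ≤ d) :
    (∏ m ∈ g.support, b m) * (∏ i, qps i ^ d) * MvPolynomial.eval yy g =
      ∑ m ∈ g.support, (a m * ∏ m' ∈ g.support.erase m, b m') *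
        ∏ i, (pps i ^ m i * qps i ^ (d - m i)) := by
  classical
  rw [eval_eq']
  rw [Finset.mul_sum]
  refine Finset.sum_congr rfl ?_
  intro m hm
  have hb : (∏ m' ∈ g.support, b m') = b m * ∏ m' ∈ g.support.erase m, b m' :=
    (Finset.mul_prod_erase _ _ hm).symm
  calc (∏ m' ∈ g.support, b m') * (∏ i, qps i ^ d) *
        (MvPolynomial.coeff m g * ∏ i, yy i ^ m i)
      = (b m * MvPolynomial.coeff m g) * (∏ m' ∈ g.support.erase m, b m') *
        ((∏ i, qps i ^ d) * ∏ i, yy i ^ m i) := by rw [hb]; ring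
    _ = a m * (∏ m' ∈ g.support.erase m, b m') *
        ∏ i, (qps i ^ d * yy i ^ m i) := by rw [hab m hm, Finset.prod_mul_distrib]
    _ = (a m * ∏ m' ∈ g.support.erase m, b m') *
        ∏ i, (pps i ^ m i * qps i ^ (d - m i)) := by
          have hprod : (∏ i, (qps i ^ d * yy i ^ m i)) =
              ∏ i, (pps i ^ m i * qps i ^ (d - m i)) := by
            refine Finset.prod_congr rfl ?_
            intro i _
            have h1 : qps i ^ d = qps i ^ (m i) * qps i ^ (d - m i) := by
              rw [← pow_add]
              congr 1
              have := hd m hm i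
              omega
            calc qps i ^ d * yy i ^ m i
                = (qps i ^ m i * yy i ^ m i) * qps i ^ (d - m i) := by
                  rw [h1]; ring
              _ = pps i ^ m i * qps i ^ (d - m i) := by
                  rw [← mul_pow, hqy i]
          rw [mul_assoc, hprod, mul_assoc]


open MvPolynomial in
lemma map_genP {σ R S0 V : Type*} [CommSemiring R] [CommSemiring S0]
    (E : MvPolynomial V R →+* S0) (s : Finset (σ →₀ ℕ)) (v : {m // m ∈ s} → V) :
    MvPolynomial.map E (∑ m ∈ s.attach, monomial m.1 (X (v m) : MvPolynomial V R)) =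
      ∑ m ∈ s.attach, monomial m.1 (E (X (v m))) := by
  rw [map_sum]
  exact Finset.sum_congr rfl fun m _ => MvPolynomial.map_monomial _ _ _

open MvPolynomial in
lemma map_genG {n pp : ℕ} {R S0 : Type*} [CommSemiring R] [CommSemiring S0]
    {V : Type*} (E : MvPolynomial V R →+* S0)
    (s : Finset (Fin pp →₀ ℕ)) (c : (Fin pp →₀ ℕ) → MvPolynomial (Fin n) R)
    (Pg Qg : Fin pp → MvPolynomial (Fin n) (MvPolynomial V R)) (d : ℕ) :
    MvPolynomial.map E (∑ m ∈ s, (MvPolynomial.map (C : R →+* MvPolynomial V R) (c m)) *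
        ∏ i, (Pg i ^ m i * Qg i ^ (d - m i))) =
      ∑ m ∈ s, (MvPolynomial.map (E.comp (C : R →+* MvPolynomial V R)) (c m)) *
        ∏ i, ((MvPolynomial.map E (Pg i)) ^ m i * (MvPolynomial.map E (Qg i)) ^ (d - m i)) := by
  rw [map_sum]
  refine Finset.sum_congr rfl fun m _ => ?_
  rw [map_mul, MvPolynomial.map_map]
  congr 1
  rw [map_prod]
  refine Finset.prod_congr rfl fun i _ => ?_
  rw [map_mul, map_pow, map_pow]

set_option maxHeartbeats 2000000 in
theorem stmt11 {n p q : ℕ} {K K' : Type*} [Field K] [Field K']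
    (φ : K →+* K') (hφ : IsAlgPure φ) (J : Fin p → Set (Fin n))
    (f : Fin q → MvPolynomial (Fin p) (MvPowerSeries (Fin n) K'))
    (hf : ∀ j (m : Fin p →₀ ℕ), LocMem φ Set.univ (MvPolynomial.coeff m (f j)))
    (yh : Fin p → MvPowerSeries (Fin n) K')
    (hyhloc : ∀ i, LocMem (RingHom.id K') (J i) (yh i))
    (hsol : ∀ j, MvPolynomial.eval yh (f j) = 0) :
    ∃ y : Fin p → MvPowerSeries (Fin n) K',
      (∀ i, LocMem φ (J i) (y i)) ∧
      (∀ j, MvPolynomial.eval y (f j) = 0) ∧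
      (∀ i, mvOrder (y i) = mvOrder (yh i)) := by
  classical
  unfold LocMem at hf hyhloc
  choose A B hA hB hBc hAB using hf
  choose Ph Qh hPh hQh hQhc hQhy using hyhloc
  -- polyToPS of the identity is the coercion
  have hcoe : ∀ (P : MvPolynomial (Fin n) K'),
      polyToPS (RingHom.id K') P = (MvPolynomial.coeToMvPowerSeries.ringHom P) := by
    intro P
    simp [polyToPS, MvPolynomial.map_id]
  -- degree bound
  set d : ℕ := Finset.univ.sup (fun j => (f j).support.sup fun m => m.sum fun _ e => e)
    with hd_def
  have hd : ∀ j, ∀ m ∈ (f j).support, ∀ i, m i ≤ d := by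
    intro j m hm i
    have h1 : m i ≤ m.sum fun _ e => e := by
      by_cases h : i ∈ m.support
      · exact Finset.single_le_sum (fun _ _ => Nat.zero_le _) h
      · simp [Finsupp.notMem_support_iff.mp h]
    have h2 : (m.sum fun _ e => e) ≤ (f j).support.sup fun m => m.sum fun _ e => e :=
      Finset.le_sup (f := fun m => m.sum fun _ e => e) hm
    have h3 : ((f j).support.sup fun m => m.sum fun _ e => e) ≤ d :=
      hd_def ▸ Finset.le_sup (f := fun j => (f j).support.sup fun m => m.sum fun _ e => e) (Finset.mem_univ j)
    omega
  -- supports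
  set M : Finset (Fin n →₀ ℕ) :=
    Finset.univ.biUnion (fun i => (Ph i).support ∪ (Qh i).support) with hM_def
  have hPM : ∀ i, (Ph i).support ⊆ M := by
    intro i m hm
    rw [hM_def]
    exact Finset.mem_biUnion.2 ⟨i, Finset.mem_univ i, Finset.mem_union_left _ hm⟩
  have hQM : ∀ i, (Qh i).support ⊆ M := by
    intro i m hm
    rw [hM_def]
    exact Finset.mem_biUnion.2 ⟨i, Finset.mem_univ i, Finset.mem_union_right _ hm⟩
  have h0SQ : ∀ i, (0 : Fin n →₀ ℕ) ∈ (Qh i).support :=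
    fun i => MvPolynomial.mem_support_iff.2 (hQhc i)
  -- order of yh via Ph
  have horder : ∀ i, mvOrder (yh i) =
      mvOrder (MvPolynomial.coeToMvPowerSeries.ringHom (Ph i)) := by
    intro i
    have h1 := hQhy i
    rw [hcoe, hcoe] at h1
    rw [← h1]
    refine (mvOrder_unit_mul ?_ _).symm
    rw [← MvPowerSeries.coeff_zero_eq_constantCoeff_apply,
      MvPolynomial.coeToMvPowerSeries.ringHom_apply, MvPolynomial.coeff_coe]
    exact hQhc i
  -- the distinguished monomial realizing the order
  have hmi : ∀ i, ∃ mm : {m : Fin n →₀ ℕ // m ∈ M}, yh i ≠ 0 →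
      MvPolynomial.coeff mm.1 (Ph i) ≠ 0 ∧
      ((mm.1.sum fun _ e => e : ℕ) : ℕ∞) = mvOrder (yh i) := by
    intro i
    by_cases h : yh i = 0
    · exact ⟨⟨0, hQM i (h0SQ i)⟩, fun h' => absurd h h'⟩
    · have hne : (MvPolynomial.coeToMvPowerSeries.ringHom (Ph i) :
          MvPowerSeries (Fin n) K') ≠ 0 := by
        intro hz
        have : mvOrder (yh i) = ⊤ := by rw [horder i, hz, mvOrder_eq_top_iff.2 rfl]
        exact h (mvOrder_eq_top_iff.1 this)
      obtain ⟨m, hm1, hm2⟩ := mvOrder_exists hne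
      rw [MvPolynomial.coeToMvPowerSeries.ringHom_apply, MvPolynomial.coeff_coe] at hm1
      exact ⟨⟨m, hPM i (MvPolynomial.mem_support_iff.2 hm1)⟩,
        fun _ => ⟨hm1, by rw [hm2, horder i]⟩⟩
  choose mi hmi using hmi
  -- the variable type for the auxiliary polynomial ring over K
  -- coefficients of P, coefficients of Q, inverses for P-order-coeff, inverses for Q-const
  -- generic polynomials with indeterminate coefficients
  set Pg : Fin p → MvPolynomial (Fin n)
      (MvPolynomial (((Fin p × {m : Fin n →₀ ℕ // m ∈ M}) ⊕ (Fin p × {m : Fin n →₀ ℕ // m ∈ M}))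
        ⊕ (Fin p ⊕ Fin p)) K) :=
    fun i => ∑ m ∈ (Ph i).support.attach,
      MvPolynomial.monomial m.1 (MvPolynomial.X (Sum.inl (Sum.inl (i, ⟨m.1, hPM i m.2⟩))))
    with hPg_def
  set Qg : Fin p → MvPolynomial (Fin n)
      (MvPolynomial (((Fin p × {m : Fin n →₀ ℕ // m ∈ M}) ⊕ (Fin p × {m : Fin n →₀ ℕ // m ∈ M}))
        ⊕ (Fin p ⊕ Fin p)) K) :=
    fun i => ∑ m ∈ (Qh i).support.attach,
      MvPolynomial.monomial m.1 (MvPolynomial.X (Sum.inl (Sum.inr (i, ⟨m.1, hQM i m.2⟩))))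
    with hQg_def
  set AB : Fin q → (Fin p →₀ ℕ) → MvPolynomial (Fin n) K :=
    fun j m => A j m * ∏ m' ∈ (f j).support.erase m, B j m' with hAB_def
  set G : Fin q → MvPolynomial (Fin n)
      (MvPolynomial (((Fin p × {m : Fin n →₀ ℕ // m ∈ M}) ⊕ (Fin p × {m : Fin n →₀ ℕ // m ∈ M}))
        ⊕ (Fin p ⊕ Fin p)) K) :=
    fun j => ∑ m ∈ (f j).support, (MvPolynomial.map MvPolynomial.C (AB j m)) *
      ∏ i, (Pg i ^ m i * Qg i ^ (d - m i)) with hG_def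
  -- the K'-points of the variables
  set a' : (((Fin p × {m : Fin n →₀ ℕ // m ∈ M}) ⊕ (Fin p × {m : Fin n →₀ ℕ // m ∈ M}))
      ⊕ (Fin p ⊕ Fin p)) → K' :=
    Sum.elim
      (Sum.elim (fun x => MvPolynomial.coeff x.2.1 (Ph x.1))
        (fun x => MvPolynomial.coeff x.2.1 (Qh x.1)))
      (Sum.elim (fun i => (MvPolynomial.coeff (mi i).1 (Ph i))⁻¹)
        (fun i => (MvPolynomial.coeff 0 (Qh i))⁻¹)) with ha'_def
  -- push the evaluation at a' through the generic polynomials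
  have hE'Pg : ∀ i, MvPolynomial.map (MvPolynomial.eval₂Hom φ a') (Pg i) = Ph i := by
    intro i
    rw [hPg_def, map_genP]
    have hc : ∀ m ∈ (Ph i).support.attach,
        MvPolynomial.monomial m.1 ((MvPolynomial.eval₂Hom φ a')
          (MvPolynomial.X (Sum.inl (Sum.inl (i, ⟨m.1, hPM i m.2⟩))))) =
        MvPolynomial.monomial m.1 (MvPolynomial.coeff m.1 (Ph i)) := by
      intro m _
      rw [MvPolynomial.eval₂Hom_X', ha'_def]
      rfl
    rw [Finset.sum_congr rfl hc,
      Finset.sum_attach _ (fun m => MvPolynomial.monomial m (MvPolynomial.coeff m (Ph i)))]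
    exact MvPolynomial.support_sum_monomial_coeff (Ph i)
  have hE'Qg : ∀ i, MvPolynomial.map (MvPolynomial.eval₂Hom φ a') (Qg i) = Qh i := by
    intro i
    rw [hQg_def, map_genP]
    have hc : ∀ m ∈ (Qh i).support.attach,
        MvPolynomial.monomial m.1 ((MvPolynomial.eval₂Hom φ a')
          (MvPolynomial.X (Sum.inl (Sum.inr (i, ⟨m.1, hQM i m.2⟩))))) =
        MvPolynomial.monomial m.1 (MvPolynomial.coeff m.1 (Qh i)) := by
      intro m _
      rw [MvPolynomial.eval₂Hom_X', ha'_def]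
      rfl
    rw [Finset.sum_congr rfl hc,
      Finset.sum_attach _ (fun m => MvPolynomial.monomial m (MvPolynomial.coeff m (Qh i)))]
    exact MvPolynomial.support_sum_monomial_coeff (Qh i)
  -- injectivity of the coercion to power series
  have hpinj : Function.Injective
      (MvPolynomial.coeToMvPowerSeries.ringHom : MvPolynomial (Fin n) K' →+*
        MvPowerSeries (Fin n) K') := by
    intro a b h
    apply MvPolynomial.coe_injective
    exact h
  -- the relation between B, coeff f, A in power series, stated via the ring hom
  have hABps : ∀ j (m : Fin p →₀ ℕ),
      MvPolynomial.coeToMvPowerSeries.ringHom (MvPolynomial.map φ (B j m)) *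
        MvPolynomial.coeff m (f j) =
      MvPolynomial.coeToMvPowerSeries.ringHom (MvPolynomial.map φ (A j m)) := by
    intro j m
    have h1 := hAB j m
    unfold polyToPS at h1
    simpa using h1
  have hqy' : ∀ i, MvPolynomial.coeToMvPowerSeries.ringHom (Qh i) * yh i =
      MvPolynomial.coeToMvPowerSeries.ringHom (Ph i) := by
    intro i
    have h1 := hQhy i
    rw [hcoe, hcoe] at h1
    exact h1
  -- Claim A : the polynomial identity over K'
  have claimA : ∀ j, ∑ m ∈ (f j).support, (MvPolynomial.map φ (AB j m)) *
      ∏ i, (Ph i ^ m i * Qh i ^ (d - m i)) = 0 := by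
    intro j
    apply hpinj
    rw [map_zero, map_sum]
    have hterm : ∀ m ∈ (f j).support,
        MvPolynomial.coeToMvPowerSeries.ringHom ((MvPolynomial.map φ (AB j m)) *
          ∏ i, (Ph i ^ m i * Qh i ^ (d - m i))) =
        (MvPolynomial.coeToMvPowerSeries.ringHom (MvPolynomial.map φ (A j m)) *
          ∏ m' ∈ (f j).support.erase m,
            MvPolynomial.coeToMvPowerSeries.ringHom (MvPolynomial.map φ (B j m'))) *
        ∏ i, ((MvPolynomial.coeToMvPowerSeries.ringHom (Ph i)) ^ m i *
          (MvPolynomial.coeToMvPowerSeries.ringHom (Qh i)) ^ (d - m i)) := by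
      intro m _
      rw [hAB_def]
      simp only [map_mul, map_prod, map_pow]
    rw [Finset.sum_congr rfl hterm,
      ← key_ps_identity (f j)
        (fun m => MvPolynomial.coeToMvPowerSeries.ringHom (MvPolynomial.map φ (A j m)))
        (fun m => MvPolynomial.coeToMvPowerSeries.ringHom (MvPolynomial.map φ (B j m)))
        (fun i => MvPolynomial.coeToMvPowerSeries.ringHom (Ph i))
        (fun i => MvPolynomial.coeToMvPowerSeries.ringHom (Qh i)) yh
        (fun m hm => hABps j m) (fun i => hqy' i) d (hd j),
      hsol j, mul_zero]
  -- the set of polynomial equations over K in the unknown coefficients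
  set S : Set (MvPolynomial (((Fin p × {m : Fin n →₀ ℕ // m ∈ M}) ⊕
      (Fin p × {m : Fin n →₀ ℕ // m ∈ M})) ⊕ (Fin p ⊕ Fin p)) K) :=
    {r | ∃ j μ, r = MvPolynomial.coeff μ (G j)} ∪
    {r | ∃ i, r = MvPolynomial.X (Sum.inr (Sum.inr i)) *
      MvPolynomial.X (Sum.inl (Sum.inr (i, ⟨0, hQM i (h0SQ i)⟩))) - 1} ∪
    {r | ∃ i, yh i ≠ 0 ∧ r = MvPolynomial.X (Sum.inr (Sum.inl i)) *
      MvPolynomial.X (Sum.inl (Sum.inl (i, mi i))) - 1} with hS_def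
  -- all equations vanish at the K'-point a'
  have hSK' : ∀ r ∈ S, MvPolynomial.eval₂Hom φ a' r = 0 := by
    rintro r ((⟨j, μ, rfl⟩ | ⟨i, rfl⟩) | ⟨i, hyi, rfl⟩)
    · rw [← MvPolynomial.coeff_map]
      rw [hG_def]
      rw [map_genG (MvPolynomial.eval₂Hom φ a') (f j).support (AB j) Pg Qg d]
      have hcomp : (MvPolynomial.eval₂Hom φ a').comp
          (MvPolynomial.C : K →+* _) = φ := MvPolynomial.eval₂Hom_comp_C φ a'
      have hsum : ∑ m ∈ (f j).support,
          (MvPolynomial.map ((MvPolynomial.eval₂Hom φ a').comp MvPolynomial.C)) (AB j m) *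
          ∏ i, ((MvPolynomial.map (MvPolynomial.eval₂Hom φ a')) (Pg i)) ^ m i *
            ((MvPolynomial.map (MvPolynomial.eval₂Hom φ a')) (Qg i)) ^ (d - m i) =
          ∑ m ∈ (f j).support, (MvPolynomial.map φ (AB j m)) *
          ∏ i, (Ph i ^ m i * Qh i ^ (d - m i)) := by
        refine Finset.sum_congr rfl fun m _ => ?_
        rw [hcomp]
        congr 1
        refine Finset.prod_congr rfl fun i _ => ?_
        rw [hE'Pg, hE'Qg]
      rw [hsum, claimA j]
      simp
    · rw [map_sub, map_mul, MvPolynomial.eval₂Hom_X', MvPolynomial.eval₂Hom_X', map_one,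
        ha'_def]
      show (MvPolynomial.coeff 0 (Qh i))⁻¹ * MvPolynomial.coeff 0 (Qh i) - 1 = 0
      rw [inv_mul_cancel₀ (hQhc i), sub_self]
    · rw [map_sub, map_mul, MvPolynomial.eval₂Hom_X', MvPolynomial.eval₂Hom_X', map_one,
        ha'_def]
      show (MvPolynomial.coeff (mi i).1 (Ph i))⁻¹ * MvPolynomial.coeff (mi i).1 (Ph i) - 1 = 0
      rw [inv_mul_cancel₀ (hmi i hyi).1, sub_self]
  -- Noetherian reduction to finitely many equations
  obtain ⟨T, hTS, hST⟩ := exists_finset_subset_span S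
  -- apply purity
  have hsolK' : ∃ y' : Fin (Fintype.card (((Fin p × {m : Fin n →₀ ℕ // m ∈ M}) ⊕
      (Fin p × {m : Fin n →₀ ℕ // m ∈ M})) ⊕ (Fin p ⊕ Fin p))) → K',
      ∀ k : Fin (Fintype.card {r // r ∈ T}),
        MvPolynomial.eval₂ φ y' (MvPolynomial.rename (Fintype.equivFin _)
          (((Fintype.equivFin {r // r ∈ T}).symm k : {r // r ∈ T}) :
            MvPolynomial _ K)) = 0 := by
    refine ⟨a' ∘ (Fintype.equivFin _).symm, fun k => ?_⟩
    rw [MvPolynomial.eval₂_rename]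
    have : (a' ∘ (Fintype.equivFin (((Fin p × {m : Fin n →₀ ℕ // m ∈ M}) ⊕
        (Fin p × {m : Fin n →₀ ℕ // m ∈ M})) ⊕ (Fin p ⊕ Fin p))).symm) ∘
        (Fintype.equivFin _) = a' := by
      funext v; simp
    rw [this]
    exact hSK' _ (hTS ((Fintype.equivFin {r // r ∈ T}).symm k).2)
  obtain ⟨xF, hxF⟩ := hφ _ _ _ hsolK'
  set xK := xF ∘ (Fintype.equivFin (((Fin p × {m : Fin n →₀ ℕ // m ∈ M}) ⊕
      (Fin p × {m : Fin n →₀ ℕ // m ∈ M})) ⊕ (Fin p ⊕ Fin p))) with hxK_def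
  -- all equations vanish at the K-point xK
  have hSK : ∀ r ∈ S, MvPolynomial.eval xK r = 0 := by
    have hT0 : ∀ r ∈ T, MvPolynomial.eval xK r = 0 := by
      intro r hr
      have h1 := hxF (Fintype.equivFin {r // r ∈ T} ⟨r, hr⟩)
      rw [Equiv.symm_apply_apply] at h1
      rw [MvPolynomial.eval_rename] at h1
      exact h1
    intro r hr
    have h1 : r ∈ Ideal.span (T : Set _) := hST hr
    have h2 : Ideal.span (T : Set (MvPolynomial _ K)) ≤
        RingHom.ker (MvPolynomial.eval xK) := by
      rw [Ideal.span_le]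
      intro t ht
      exact RingHom.mem_ker.2 (hT0 t ht)
    exact RingHom.mem_ker.1 (h2 h1)
  -- the K-side polynomials
  set PK : Fin p → MvPolynomial (Fin n) K := fun i => ∑ m ∈ (Ph i).support.attach,
    MvPolynomial.monomial m.1 (xK (Sum.inl (Sum.inl (i, ⟨m.1, hPM i m.2⟩)))) with hPK_def
  set QK : Fin p → MvPolynomial (Fin n) K := fun i => ∑ m ∈ (Qh i).support.attach,
    MvPolynomial.monomial m.1 (xK (Sum.inl (Sum.inr (i, ⟨m.1, hQM i m.2⟩)))) with hQK_def
  have hmapPK : ∀ i, MvPolynomial.map (MvPolynomial.eval xK) (Pg i) = PK i := by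
    intro i
    rw [hPg_def, map_genP, hPK_def]
    exact Finset.sum_congr rfl fun m _ => by rw [MvPolynomial.eval_X]
  have hmapQK : ∀ i, MvPolynomial.map (MvPolynomial.eval xK) (Qg i) = QK i := by
    intro i
    rw [hQg_def, map_genP, hQK_def]
    exact Finset.sum_congr rfl fun m _ => by rw [MvPolynomial.eval_X]
  -- the polynomial identity over K
  have hGK : ∀ j, ∑ m ∈ (f j).support, (AB j m) *
      ∏ i, (PK i ^ m i * QK i ^ (d - m i)) = 0 := by
    intro j
    have h1 : MvPolynomial.map (MvPolynomial.eval xK) (G j) = 0 := by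
      apply MvPolynomial.ext
      intro μ
      rw [MvPolynomial.coeff_map]
      rw [hSK _ (by rw [hS_def]; exact Or.inl (Or.inl ⟨j, μ, rfl⟩))]
      simp
    rw [hG_def, map_genG] at h1
    have hcomp : (MvPolynomial.eval xK).comp (MvPolynomial.C) = RingHom.id K :=
      RingHom.ext fun k => by simp
    have hsum : ∑ m ∈ (f j).support,
        (MvPolynomial.map ((MvPolynomial.eval xK).comp MvPolynomial.C)) (AB j m) *
        ∏ i, ((MvPolynomial.map (MvPolynomial.eval xK)) (Pg i)) ^ m i *
          ((MvPolynomial.map (MvPolynomial.eval xK)) (Qg i)) ^ (d - m i) =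
        ∑ m ∈ (f j).support, (AB j m) * ∏ i, (PK i ^ m i * QK i ^ (d - m i)) := by
      refine Finset.sum_congr rfl fun m _ => ?_
      rw [hcomp, MvPolynomial.map_id]
      congr 1
      refine Finset.prod_congr rfl fun i _ => ?_
      rw [hmapPK, hmapQK]
    rw [hsum] at h1
    exact h1
  -- nonzero constant coefficient of QK
  have hQK0 : ∀ i, MvPolynomial.coeff 0 (QK i) ≠ 0 := by
    intro i
    have h1 := hSK _ (by rw [hS_def]; exact Or.inl (Or.inr ⟨i, rfl⟩))
    rw [map_sub, map_mul, MvPolynomial.eval_X, MvPolynomial.eval_X, map_one,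
      sub_eq_zero] at h1
    have h3 : MvPolynomial.coeff 0 (QK i) =
        xK (Sum.inl (Sum.inr (i, ⟨0, hQM i (h0SQ i)⟩))) := by
      rw [hQK_def]
      exact coeff_sum_monomial_attach_mem _ _ 0 (h0SQ i)
    rw [h3]
    intro h0
    rw [h0, mul_zero] at h1
    exact one_ne_zero h1.symm
  -- coefficients of polyToPS
  have hcoeffPS : ∀ (P : MvPolynomial (Fin n) K) (μ : Fin n →₀ ℕ),
      MvPowerSeries.coeff μ (polyToPS φ P) = φ (MvPolynomial.coeff μ P) := by
    intro P μ
    unfold polyToPS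
    rw [RingHom.comp_apply, MvPolynomial.coeToMvPowerSeries.ringHom_apply,
      MvPolynomial.coeff_coe, MvPolynomial.coeff_map]
  have hconstQK : ∀ i, MvPowerSeries.constantCoeff (polyToPS φ (QK i)) ≠ 0 := by
    intro i
    rw [← MvPowerSeries.coeff_zero_eq_constantCoeff_apply, hcoeffPS]
    intro h0
    exact hQK0 i (φ.injective (by rw [h0, map_zero]))
  -- the candidate solution
  set yK : Fin p → MvPowerSeries (Fin n) K' :=
    fun i => (polyToPS φ (QK i))⁻¹ * polyToPS φ (PK i) with hyK_def
  have hQyP : ∀ i, polyToPS φ (QK i) * yK i = polyToPS φ (PK i) := by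
    intro i
    rw [hyK_def, ← mul_assoc, MvPowerSeries.mul_inv_cancel _ (hconstQK i), one_mul]
  -- the evaluation of f at yK vanishes
  have heval : ∀ j, MvPolynomial.eval yK (f j) = 0 := by
    intro j
    have hABps' : ∀ m ∈ (f j).support,
        MvPolynomial.coeToMvPowerSeries.ringHom (MvPolynomial.map φ (B j m)) *
          MvPolynomial.coeff m (f j) =
        MvPolynomial.coeToMvPowerSeries.ringHom (MvPolynomial.map φ (A j m)) :=
      fun m _ => hABps j m
    have hkey := key_ps_identity (f j)
      (fun m => MvPolynomial.coeToMvPowerSeries.ringHom (MvPolynomial.map φ (A j m)))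
      (fun m => MvPolynomial.coeToMvPowerSeries.ringHom (MvPolynomial.map φ (B j m)))
      (fun i => polyToPS φ (PK i)) (fun i => polyToPS φ (QK i)) yK
      hABps' hQyP d (hd j)
    have hz : ∑ m ∈ (f j).support,
        (MvPolynomial.coeToMvPowerSeries.ringHom (MvPolynomial.map φ (A j m)) *
          ∏ m' ∈ (f j).support.erase m,
            MvPolynomial.coeToMvPowerSeries.ringHom (MvPolynomial.map φ (B j m'))) *
        ∏ i, ((polyToPS φ (PK i)) ^ m i * (polyToPS φ (QK i)) ^ (d - m i)) = 0 := by
      have h2 := congrArg (polyToPS φ) (hGK j)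
      rw [map_zero, map_sum] at h2
      rw [← h2]
      refine Finset.sum_congr rfl fun m _ => ?_
      rw [hAB_def]
      unfold polyToPS
      simp only [map_mul, map_prod, map_pow, RingHom.comp_apply]
    rw [hz] at hkey
    have hU : IsUnit ((∏ m ∈ (f j).support,
        MvPolynomial.coeToMvPowerSeries.ringHom (MvPolynomial.map φ (B j m))) *
        ∏ i, (polyToPS φ (QK i)) ^ d) := by
      rw [MvPowerSeries.isUnit_iff_constantCoeff]
      simp only [map_mul, map_prod, map_pow]
      rw [isUnit_iff_ne_zero]
      apply mul_ne_zero
      · rw [Finset.prod_ne_zero_iff]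
        intro m _
        have : MvPowerSeries.constantCoeff
            (MvPolynomial.coeToMvPowerSeries.ringHom (MvPolynomial.map φ (B j m))) =
            φ (MvPolynomial.coeff 0 (B j m)) := by
          have := hcoeffPS (B j m) 0
          unfold polyToPS at this
          rw [RingHom.comp_apply] at this
          rw [← MvPowerSeries.coeff_zero_eq_constantCoeff_apply, this]
        rw [this]
        intro h0
        exact hBc j m (φ.injective (by rw [h0, map_zero]))
      · rw [Finset.prod_ne_zero_iff]
        intro i _
        exact pow_ne_zero _ (hconstQK i)
    exact (hU.mul_right_eq_zero).1 hkey
  -- order computations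
  have hordK : ∀ i, mvOrder (yK i) = mvOrder (polyToPS φ (PK i)) := by
    intro i
    rw [← hQyP i]
    exact (mvOrder_unit_mul (hconstQK i) (yK i)).symm
  have hordEq : ∀ i, mvOrder (yK i) = mvOrder (yh i) := by
    intro i
    rw [hordK i]
    by_cases h : yh i = 0
    · have h1 : mvOrder (MvPolynomial.coeToMvPowerSeries.ringHom (Ph i)) = ⊤ := by
        rw [← horder i, h, mvOrder_eq_top_iff]
      have hPh0 : Ph i = 0 := hpinj (by rw [mvOrder_eq_top_iff.1 h1, map_zero])
      have hPK0 : PK i = 0 := by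
        apply MvPolynomial.ext
        intro μ
        rw [hPK_def, MvPolynomial.coeff_zero]
        exact coeff_sum_monomial_attach_not_mem _ _ _ (by rw [hPh0]; simp)
      rw [hPK0, map_zero, mvOrder_eq_top_iff.2 rfl, h, mvOrder_eq_top_iff.2 rfl]
    · obtain ⟨hc, hdeg⟩ := hmi i h
      have hmem : (mi i).1 ∈ (Ph i).support := MvPolynomial.mem_support_iff.2 hc
      have hxz := hSK _ (by rw [hS_def]; exact Or.inr ⟨i, h, rfl⟩)
      rw [map_sub, map_mul, MvPolynomial.eval_X, MvPolynomial.eval_X, map_one,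
        sub_eq_zero] at hxz
      have hPKc : MvPolynomial.coeff (mi i).1 (PK i) =
          xK (Sum.inl (Sum.inl (i, mi i))) := by
        rw [hPK_def]
        rw [coeff_sum_monomial_attach_mem _ _ _ hmem]
      have hne0 : MvPolynomial.coeff (mi i).1 (PK i) ≠ 0 := by
        rw [hPKc]
        intro h0
        rw [h0, mul_zero] at hxz
        exact one_ne_zero hxz.symm
      refine mvOrder_eq_of ⟨(mi i).1, ?_, hdeg⟩ ?_
      · rw [hcoeffPS]
        intro h0
        exact hne0 (φ.injective (by rw [h0, map_zero]))
      · intro m hm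
        rw [hcoeffPS] at hm
        have h1 : MvPolynomial.coeff m (PK i) ≠ 0 := fun h0 => hm (by rw [h0, map_zero])
        have h2 : m ∈ (Ph i).support := by
          by_contra h2
          refine h1 ?_
          rw [hPK_def]
          exact coeff_sum_monomial_attach_not_mem _ _ _ h2
        have h3 : MvPowerSeries.coeff m
            (MvPolynomial.coeToMvPowerSeries.ringHom (Ph i)) ≠ 0 := by
          rw [MvPolynomial.coeToMvPowerSeries.ringHom_apply, MvPolynomial.coeff_coe]
          exact MvPolynomial.mem_support_iff.1 h2
        rw [horder i]
        exact mvOrder_le h3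
  -- conclusion
  refine ⟨yK, ?_, heval, hordEq⟩
  intro i
  refine ⟨PK i, QK i, ?_, ?_, hQK0 i, hQyP i⟩
  · intro m hm l hl
    have h2 : m ∈ (Ph i).support := by
      by_contra h2
      refine MvPolynomial.mem_support_iff.1 hm ?_
      rw [hPK_def]
      exact coeff_sum_monomial_attach_not_mem _ _ _ h2
    exact hPh i m h2 l hl
  · intro m hm l hl
    have h2 : m ∈ (Qh i).support := by
      by_contra h2
      refine MvPolynomial.mem_support_iff.1 hm ?_
      rw [hQK_def]
      exact coeff_sum_monomial_attach_not_mem _ _ _ h2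
    exact hQh i m h2 l hl
end

section
/- Let K be an algebraically closed field, K ⊆ K' a field extension, and f a finite system of polynomials in K[x]_{(x)}[Y₁,…,Y_p] with x = (x₁,…,xₙ). If f = 0 has a solution ŷ with ŷᵢ ∈ K'[x_{Jᵢ}]_{(x_{Jᵢ})} for subsets Jᵢ ⊆ {1,…,n}, then f = 0 has a solution y with yᵢ ∈ K[x_{Jᵢ}]_{(x_{Jᵢ})} and ord yᵢ = ord ŷᵢ for all i. -/
section aux
variable {σ : Type*}

def tot (m : σ →₀ ℕ) : ℕ := m.sum fun _ e => e

lemma tot_add (a b : σ →₀ ℕ) : tot (a + b) = tot a + tot b :=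
  Finsupp.sum_add_index' (fun _ => rfl) (fun _ _ _ => rfl)

lemma tot_eq_zero {a : σ →₀ ℕ} (h : tot a = 0) : a = 0 := by
  ext i
  by_cases hi : i ∈ a.support
  · have := (Finset.sum_eq_zero_iff).1 h i hi
    simpa using this
  · simpa using Finsupp.notMem_support_iff.1 hi

variable {R : Type*} [CommSemiring R]

lemma mvOrder_def (y : MvPowerSeries σ R) :
    mvOrder y = sInf {d : ℕ∞ | ∃ m : σ →₀ ℕ, MvPowerSeries.coeff m y ≠ 0 ∧ ((tot m : ℕ) : ℕ∞) = d} := rfl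

lemma mvOrder_zero : mvOrder (0 : MvPowerSeries σ R) = ⊤ := by
  rw [mvOrder_def]
  refine (congrArg sInf ?_).trans sInf_empty
  ext d; simp

lemma mvOrder_le_s12 {y : MvPowerSeries σ R} {m : σ →₀ ℕ} (h : MvPowerSeries.coeff m y ≠ 0) :
    mvOrder y ≤ (tot m : ℕ∞) := sInf_le ⟨m, h, rfl⟩

lemma coeff_eq_zero_of_lt_mvOrder {y : MvPowerSeries σ R} {m : σ →₀ ℕ}
    (h : ((tot m : ℕ) : ℕ∞) < mvOrder y) : MvPowerSeries.coeff m y = 0 := by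
  by_contra hc
  exact absurd (mvOrder_le_s12 hc) (not_le.2 h)

lemma mvOrder_eq_coe {y : MvPowerSeries σ R} {δ : ℕ}
    (h1 : ∀ m : σ →₀ ℕ, tot m < δ → MvPowerSeries.coeff m y = 0)
    (h2 : ∃ m : σ →₀ ℕ, tot m = δ ∧ MvPowerSeries.coeff m y ≠ 0) : mvOrder y = δ := by
  obtain ⟨m, hm, hc⟩ := h2
  refine le_antisymm (by simpa [hm] using mvOrder_le_s12 hc) ?_
  refine le_sInf ?_
  rintro d ⟨m', hc', rfl⟩
  have : δ ≤ tot m' := not_lt.1 (fun h => hc' (h1 m' h))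
  exact_mod_cast this

lemma exists_tot_eq_of_mvOrder_coe {y : MvPowerSeries σ R} {δ : ℕ} (h : mvOrder y = δ) :
    ∃ m : σ →₀ ℕ, tot m = δ ∧ MvPowerSeries.coeff m y ≠ 0 := by
  by_contra hne
  push_neg at hne
  have hb : ∀ d ∈ {d : ℕ∞ | ∃ m : σ →₀ ℕ, MvPowerSeries.coeff m y ≠ 0 ∧ ((tot m : ℕ) : ℕ∞) = d},
      ((δ : ℕ∞) + 1) ≤ d := by
    rintro d ⟨m, hc, rfl⟩
    have h1 : (δ : ℕ∞) ≤ (tot m : ℕ∞) := h ▸ mvOrder_le_s12 hc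
    have h2 : tot m ≠ δ := fun he => hc (hne m he)
    have : δ < tot m := lt_of_le_of_ne (by exact_mod_cast h1) (Ne.symm h2)
    exact_mod_cast this
  have := le_sInf hb
  rw [← mvOrder_def, h] at this
  have h3 : ((δ + 1 : ℕ) : ℕ∞) ≤ ((δ : ℕ) : ℕ∞) := by exact_mod_cast this
  have h4 : δ + 1 ≤ δ := by exact_mod_cast h3
  omega

lemma coeff_polyToPS {F L : Type*} [CommSemiring F] [CommSemiring L] (φ : F →+* L)
    (P : MvPolynomial σ F) (m : σ →₀ ℕ) :
    MvPowerSeries.coeff m (polyToPS φ P) = φ (MvPolynomial.coeff m P) := by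
  simp [polyToPS, MvPolynomial.coeff_coe, MvPolynomial.coeff_map]

lemma mvOrder_eq_of_mul {L : Type*} [Field L] {Q y P : MvPowerSeries σ L}
    (hQ : MvPowerSeries.constantCoeff Q ≠ 0) (h : Q * y = P) : mvOrder y = mvOrder P := by
  classical
  have key : ∀ m : σ →₀ ℕ, MvPowerSeries.coeff m y ≠ 0 →
      MvPowerSeries.coeff m P ≠ 0 ∨ ∃ b, tot b < tot m ∧ MvPowerSeries.coeff b y ≠ 0 := by
    intro m hy
    by_cases hP : MvPowerSeries.coeff m P ≠ 0
    · exact Or.inl hP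
    · right
      push_neg at hP
      have hm : (∑ pr ∈ Finset.HasAntidiagonal.antidiagonal m,
          MvPowerSeries.coeff pr.1 Q * MvPowerSeries.coeff pr.2 y) = 0 := by
        rw [← MvPowerSeries.coeff_mul, h, hP]
      have hmem : ((0 : σ →₀ ℕ), m) ∈ Finset.HasAntidiagonal.antidiagonal m := by
        rw [Finset.HasAntidiagonal.mem_antidiagonal]; exact zero_add m
      have hsplit := Finset.add_sum_erase _ (fun pr : (σ →₀ ℕ) × (σ →₀ ℕ) =>
        MvPowerSeries.coeff pr.1 Q * MvPowerSeries.coeff pr.2 y) hmem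
      have hne0 : MvPowerSeries.coeff 0 Q * MvPowerSeries.coeff m y ≠ 0 :=
        mul_ne_zero hQ hy
      have hsum : (∑ pr ∈ (Finset.HasAntidiagonal.antidiagonal m).erase (0, m),
          MvPowerSeries.coeff pr.1 Q * MvPowerSeries.coeff pr.2 y) ≠ 0 := by
        intro h0
        rw [← hsplit, h0, add_zero] at hm
        exact hne0 hm
      obtain ⟨pr, hprmem, hpr⟩ : ∃ pr ∈ (Finset.HasAntidiagonal.antidiagonal m).erase (0, m),
          MvPowerSeries.coeff pr.1 Q * MvPowerSeries.coeff pr.2 y ≠ 0 := by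
        by_contra hcc
        push_neg at hcc
        exact hsum (Finset.sum_eq_zero hcc)
      have hadd : pr.1 + pr.2 = m := Finset.HasAntidiagonal.mem_antidiagonal.1 (Finset.mem_of_mem_erase hprmem)
      have hpne : pr ≠ (0, m) := Finset.ne_of_mem_erase hprmem
      have h1ne : pr.1 ≠ 0 := by
        intro h0
        apply hpne
        have : pr.2 = m := by rw [← hadd, h0, zero_add]
        exact Prod.ext h0 this
      refine ⟨pr.2, ?_, fun h0 => hpr (by rw [h0, mul_zero])⟩
      have := tot_add pr.1 pr.2
      rw [hadd] at this
      have h1 : tot pr.1 ≠ 0 := fun h0 => h1ne (tot_eq_zero h0)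
      omega
  have claim2 : ∀ N : ℕ, ∀ m : σ →₀ ℕ, tot m ≤ N → MvPowerSeries.coeff m y ≠ 0 →
      ∃ m', tot m' ≤ tot m ∧ MvPowerSeries.coeff m' P ≠ 0 := by
    intro N
    induction N with
    | zero =>
      intro m hm hy
      rcases key m hy with hP | ⟨b, hb, _⟩
      · exact ⟨m, le_refl _, hP⟩
      · omega
    | succ N ih =>
      intro m hm hy
      rcases key m hy with hP | ⟨b, hb, hyb⟩
      · exact ⟨m, le_refl _, hP⟩
      · obtain ⟨m', hm', hP'⟩ := ih b (by omega) hyb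
        exact ⟨m', by omega, hP'⟩
  have claim1 : ∀ m : σ →₀ ℕ, MvPowerSeries.coeff m P ≠ 0 →
      ∃ b, tot b ≤ tot m ∧ MvPowerSeries.coeff b y ≠ 0 := by
    intro m hP
    rw [← h, MvPowerSeries.coeff_mul] at hP
    obtain ⟨pr, hprmem, hpr⟩ : ∃ pr ∈ Finset.HasAntidiagonal.antidiagonal m,
        MvPowerSeries.coeff pr.1 Q * MvPowerSeries.coeff pr.2 y ≠ 0 := by
      by_contra hcc
      push_neg at hcc
      exact hP (Finset.sum_eq_zero hcc)
    have hadd : pr.1 + pr.2 = m := Finset.HasAntidiagonal.mem_antidiagonal.1 hprmem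
    refine ⟨pr.2, ?_, fun h0 => hpr (by rw [h0, mul_zero])⟩
    have := tot_add pr.1 pr.2
    rw [hadd] at this
    omega
  apply le_antisymm
  · refine le_sInf ?_
    rintro d ⟨m, hc, rfl⟩
    obtain ⟨b, hb, hyb⟩ := claim1 m hc
    exact le_trans (mvOrder_le_s12 hyb) (by exact_mod_cast hb)
  · refine le_sInf ?_
    rintro d ⟨m, hc, rfl⟩
    obtain ⟨m', hm', hP'⟩ := claim2 (tot m) m (le_refl _) hc
    exact le_trans (mvOrder_le_s12 hP') (by exact_mod_cast hm')

lemma alg_pure {K L : Type*} [Field K] [IsAlgClosed K] [Field L] (φ : K →+* L)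
    {σ ι : Type*} [Finite σ] (F : ι → MvPolynomial σ K)
    (h : ∃ zh : σ → L, ∀ j, MvPolynomial.eval₂ φ zh (F j) = 0) :
    ∃ z : σ → K, ∀ j, MvPolynomial.eval z (F j) = 0 := by
  obtain ⟨zh, hzh⟩ := h
  have hne : Ideal.span (Set.range F) ≠ ⊤ := by
    intro htop
    have h1 : (1 : MvPolynomial σ K) ∈ Ideal.span (Set.range F) := htop ▸ Submodule.mem_top
    have hker : Ideal.span (Set.range F) ≤ RingHom.ker (MvPolynomial.eval₂Hom φ zh) := by
      rw [Ideal.span_le]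
      rintro _ ⟨j, rfl⟩
      rw [SetLike.mem_coe, RingHom.mem_ker]
      exact hzh j
    have h2 := hker h1
    rw [RingHom.mem_ker] at h2
    simp at h2
  obtain ⟨Mx, hM, hle⟩ := Ideal.exists_le_maximal _ hne
  obtain ⟨x, rfl⟩ := (MvPolynomial.isMaximal_iff_eq_vanishingIdeal_singleton (I := Mx)).1 hM
  refine ⟨x, fun j => ?_⟩
  have hmem : F j ∈ MvPolynomial.vanishingIdeal K {x} := hle (Ideal.subset_span ⟨j, rfl⟩)
  exact (MvPolynomial.mem_vanishingIdeal_singleton_iff x (F j)).1 hmem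

end aux

section core
open MvPolynomial

variable {n : ℕ} {L : Type*}

lemma polyToPS_map {F : Type*} [CommSemiring F] [CommSemiring L] (φ : F →+* L)
    (P : MvPolynomial (Fin n) F) :
    polyToPS (RingHom.id L) (MvPolynomial.map φ P) = polyToPS φ P := by
  simp [polyToPS, MvPolynomial.map_map, RingHom.id_comp]

noncomputable def mkPoly [CommSemiring L] (T : Finset (Fin n →₀ ℕ))
    (g : (Fin n →₀ ℕ) → Prop) [DecidablePred g] (v : {x // x ∈ T} → L) :
    MvPolynomial (Fin n) L :=
  ∑ m ∈ T.attach, if g ↑m then MvPolynomial.monomial (↑m : Fin n →₀ ℕ) (v m) else 0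

lemma coeff_mkPoly_of_mem [CommSemiring L] {T : Finset (Fin n →₀ ℕ)}
    {g : (Fin n →₀ ℕ) → Prop} [DecidablePred g] (v : {x // x ∈ T} → L)
    (m : {x // x ∈ T}) (hg : g ↑m) :
    MvPolynomial.coeff (↑m : Fin n →₀ ℕ) (mkPoly T g v) = v m := by
  classical
  rw [mkPoly, MvPolynomial.coeff_sum]
  rw [Finset.sum_eq_single m]
  · simp [hg, MvPolynomial.coeff_monomial]
  · intro b _ hbm
    by_cases hgb : g ↑b
    · simp only [if_pos hgb, MvPolynomial.coeff_monomial]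
      rw [if_neg]
      intro he
      exact hbm (Subtype.ext he)
    · simp [hgb]
  · intro h
    exact absurd (Finset.mem_attach _ _) h

lemma coeff_mkPoly_eq_zero [CommSemiring L] {T : Finset (Fin n →₀ ℕ)}
    {g : (Fin n →₀ ℕ) → Prop} [DecidablePred g] (v : {x // x ∈ T} → L)
    {m : Fin n →₀ ℕ} (h : m ∉ T ∨ ¬ g m) :
    MvPolynomial.coeff m (mkPoly T g v) = 0 := by
  classical
  rw [mkPoly, MvPolynomial.coeff_sum]
  refine Finset.sum_eq_zero fun b _ => ?_
  by_cases hgb : g ↑b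
  · simp only [if_pos hgb, MvPolynomial.coeff_monomial]
    rw [if_neg]
    intro he
    rcases h with h | h
    · exact h (he ▸ b.2)
    · exact h (he ▸ hgb)
  · simp [hgb]

lemma map_mkPoly {F : Type*} [CommSemiring F] [CommSemiring L] (φ : F →+* L)
    (T : Finset (Fin n →₀ ℕ)) (g : (Fin n →₀ ℕ) → Prop) [DecidablePred g]
    (v : {x // x ∈ T} → F) :
    MvPolynomial.map φ (mkPoly T g v) = mkPoly T g (fun m => φ (v m)) := by
  rw [mkPoly, mkPoly, map_sum]
  refine Finset.sum_congr rfl fun m _ => ?_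
  rw [apply_ite (MvPolynomial.map φ), MvPolynomial.map_monomial, map_zero]

lemma mkPoly_eq_self [CommSemiring L] {T : Finset (Fin n →₀ ℕ)}
    {g : (Fin n →₀ ℕ) → Prop} [DecidablePred g] (P : MvPolynomial (Fin n) L)
    (hT : P.support ⊆ T) (hg : ∀ m ∈ P.support, g m) :
    mkPoly T g (fun m => MvPolynomial.coeff ↑m P) = P := by
  classical
  apply MvPolynomial.ext
  intro μ
  by_cases hμ : μ ∈ P.support
  · rw [coeff_mkPoly_of_mem (m := ⟨μ, hT hμ⟩) _ (hg μ hμ)]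
  · rw [MvPolynomial.notMem_support_iff.1 hμ]
    by_cases hμT : μ ∈ T
    · by_cases hgμ : g μ
      · rw [coeff_mkPoly_of_mem (m := ⟨μ, hμT⟩) _ hgμ]
        exact MvPolynomial.notMem_support_iff.1 hμ
      · exact coeff_mkPoly_eq_zero _ (Or.inr hgμ)
    · exact coeff_mkPoly_eq_zero _ (Or.inl hμT)

variable {pp : ℕ}

noncomputable def genG [CommSemiring L] (s : Finset (Fin pp →₀ ℕ))
    (A B : (Fin pp →₀ ℕ) → MvPolynomial (Fin n) L)
    (P Q : Fin pp → MvPolynomial (Fin n) L) (D : ℕ) : MvPolynomial (Fin n) L :=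
  ∑ m ∈ s, A m * (∏ m' ∈ s.erase m, B m') * ∏ i, (P i) ^ (m i) * (Q i) ^ (D - m i)

lemma map_genG_s12 {F : Type*} [CommSemiring F] [CommSemiring L] (φ : F →+* L)
    (s : Finset (Fin pp →₀ ℕ)) (A B : (Fin pp →₀ ℕ) → MvPolynomial (Fin n) F)
    (P Q : Fin pp → MvPolynomial (Fin n) F) (D : ℕ) :
    MvPolynomial.map φ (genG s A B P Q D) =
      genG s (fun m => MvPolynomial.map φ (A m)) (fun m => MvPolynomial.map φ (B m))
        (fun i => MvPolynomial.map φ (P i)) (fun i => MvPolynomial.map φ (Q i)) D := by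
  rw [genG, genG, map_sum]
  refine Finset.sum_congr rfl fun m _ => ?_
  rw [map_mul, map_mul, map_prod, map_prod]
  congr 1
  refine Finset.prod_congr rfl fun i _ => ?_
  rw [map_mul, map_pow, map_pow]

lemma core [Field L] (s : Finset (Fin pp →₀ ℕ)) (c : (Fin pp →₀ ℕ) → MvPowerSeries (Fin n) L)
    (A B : (Fin pp →₀ ℕ) → MvPolynomial (Fin n) L)
    (hAB : ∀ m ∈ s, polyToPS (RingHom.id L) (B m) * c m = polyToPS (RingHom.id L) (A m))
    (P Q : Fin pp → MvPolynomial (Fin n) L) (y : Fin pp → MvPowerSeries (Fin n) L)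
    (hy : ∀ i, polyToPS (RingHom.id L) (Q i) * y i = polyToPS (RingHom.id L) (P i))
    (D : ℕ) (hD : ∀ m ∈ s, ∀ i, m i ≤ D) :
    polyToPS (RingHom.id L) (genG s A B P Q D) =
      (∏ m ∈ s, polyToPS (RingHom.id L) (B m)) *
        (∏ i, (polyToPS (RingHom.id L) (Q i)) ^ D) *
        (∑ m ∈ s, c m * ∏ i, (y i) ^ (m i)) := by
  set T := polyToPS (RingHom.id L) with hT
  rw [genG, map_sum, Finset.mul_sum]
  refine Finset.sum_congr rfl fun m hm => ?_
  rw [map_mul, map_mul, map_prod]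
  have hprod : T (∏ i, (P i) ^ (m i) * (Q i) ^ (D - m i)) =
      (∏ i, (T (Q i)) ^ D) * ∏ i, (y i) ^ (m i) := by
    rw [map_prod, ← Finset.prod_mul_distrib]
    refine Finset.prod_congr rfl fun i _ => ?_
    rw [map_mul, map_pow, map_pow, ← hy i, mul_pow, mul_right_comm, ← pow_add,
      Nat.add_sub_cancel' (hD m hm i)]
  rw [hprod, ← hAB m hm, ← Finset.mul_prod_erase s (fun m' => T (B m')) hm]
  ring

lemma core' [Field L] (s : Finset (Fin pp →₀ ℕ)) (c : (Fin pp →₀ ℕ) → MvPowerSeries (Fin n) L)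
    (A B : (Fin pp →₀ ℕ) → MvPolynomial (Fin n) L)
    (hB0 : ∀ m ∈ s, MvPolynomial.coeff 0 (B m) ≠ 0)
    (hAB : ∀ m ∈ s, polyToPS (RingHom.id L) (B m) * c m = polyToPS (RingHom.id L) (A m))
    (P Q : Fin pp → MvPolynomial (Fin n) L) (y : Fin pp → MvPowerSeries (Fin n) L)
    (hy : ∀ i, polyToPS (RingHom.id L) (Q i) * y i = polyToPS (RingHom.id L) (P i))
    (hQ0 : ∀ i, MvPolynomial.coeff 0 (Q i) ≠ 0)
    (D : ℕ) (hD : ∀ m ∈ s, ∀ i, m i ≤ D) :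
    genG s A B P Q D = 0 ↔ (∑ m ∈ s, c m * ∏ i, (y i) ^ (m i)) = 0 := by
  have hcoeff : ∀ (R : MvPolynomial (Fin n) L) (μ : Fin n →₀ ℕ),
      MvPowerSeries.coeff μ (polyToPS (RingHom.id L) R) = MvPolynomial.coeff μ R := by
    intro R μ
    rw [coeff_polyToPS, RingHom.id_apply]
  have hinj : ∀ R : MvPolynomial (Fin n) L, polyToPS (RingHom.id L) R = 0 ↔ R = 0 := by
    intro R
    constructor
    · intro h
      apply MvPolynomial.ext
      intro μ
      rw [← hcoeff, h, map_zero, MvPolynomial.coeff_zero]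
    · rintro rfl
      exact map_zero _
  have hunit : IsUnit ((∏ m ∈ s, polyToPS (RingHom.id L) (B m)) *
      (∏ i, (polyToPS (RingHom.id L) (Q i)) ^ D)) := by
    rw [MvPowerSeries.isUnit_iff_constantCoeff, map_mul, map_prod, map_prod, isUnit_iff_ne_zero]
    apply mul_ne_zero
    · rw [Finset.prod_ne_zero_iff]
      intro m hm
      have h0 : MvPowerSeries.constantCoeff (polyToPS (RingHom.id L) (B m)) =
          MvPolynomial.coeff 0 (B m) := hcoeff (B m) 0
      rw [h0]
      exact hB0 m hm
    · rw [Finset.prod_ne_zero_iff]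
      intro i _
      rw [map_pow]
      apply pow_ne_zero
      have h0 : MvPowerSeries.constantCoeff (polyToPS (RingHom.id L) (Q i)) =
          MvPolynomial.coeff 0 (Q i) := hcoeff (Q i) 0
      rw [h0]
      exact hQ0 i
  rw [← hinj, core s c A B hAB P Q y hy D hD]
  constructor
  · intro h
    rcases mul_eq_zero.1 h with h | h
    · exact absurd h hunit.ne_zero
    · exact h
  · intro h
    rw [h, mul_zero]

end core

section more
variable {σ : Type*}

lemma apply_le_tot (m : σ →₀ ℕ) (i : σ) : m i ≤ tot m := by
  classical
  by_cases hi : i ∈ m.support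
  · exact Finset.single_le_sum (f := fun k => m k) (fun _ _ => Nat.zero_le _) hi
  · rw [Finsupp.notMem_support_iff.1 hi]
    exact Nat.zero_le _

lemma constantCoeff_polyToPS {F L : Type*} [CommSemiring F] [CommSemiring L] (φ : F →+* L)
    (P : MvPolynomial σ F) :
    MvPowerSeries.constantCoeff (polyToPS φ P) = φ (MvPolynomial.coeff 0 P) := by
  rw [← MvPowerSeries.coeff_zero_eq_constantCoeff_apply, coeff_polyToPS]

lemma map_eval₂Hom_map_C {F L τ : Type*} [CommSemiring F] [CommSemiring L]
    (ψ : F →+* L) (z : τ → L) (a : MvPolynomial σ F) :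
    MvPolynomial.map (MvPolynomial.eval₂Hom ψ z) (MvPolynomial.map MvPolynomial.C a) =
      MvPolynomial.map ψ a := by
  rw [MvPolynomial.map_map]
  congr 1
  exact RingHom.ext fun r => by simp

end more


theorem stmt12 {n p q : ℕ} {K K' : Type*} [Field K] [IsAlgClosed K] [Field K'] [Algebra K K']
    (J : Fin p → Set (Fin n))
    (f : Fin q → MvPolynomial (Fin p) (MvPowerSeries (Fin n) K'))
    (hf : ∀ j (m : Fin p →₀ ℕ), LocMem (algebraMap K K') Set.univ (MvPolynomial.coeff m (f j)))
    (yh : Fin p → MvPowerSeries (Fin n) K')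
    (hyhloc : ∀ i, LocMem (RingHom.id K') (J i) (yh i))
    (hsol : ∀ j, MvPolynomial.eval yh (f j) = 0) :
    ∃ y : Fin p → MvPowerSeries (Fin n) K',
      (∀ i, LocMem (algebraMap K K') (J i) (y i)) ∧
      (∀ j, MvPolynomial.eval y (f j) = 0) ∧
      (∀ i, mvOrder (y i) = mvOrder (yh i)) := by
  classical
  set φ := algebraMap K K' with hφdef
  have hφinj : Function.Injective φ := φ.injective
  have hφne : ∀ a : K, a ≠ 0 → φ a ≠ 0 := by
    intro a ha h0
    exact ha (hφinj (by rw [h0, map_zero]))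
  -- coefficient data
  choose A B hA hBsupp hB0 hAB using hf
  -- solution data, normalized
  choose Ph0 Qh0 hPs0 hQs0 hQc0 hQy0 using hyhloc
  set Ph : Fin p → MvPolynomial (Fin n) K' :=
    fun i => MvPolynomial.C (MvPolynomial.coeff 0 (Qh0 i))⁻¹ * Ph0 i with hPh
  set Qh : Fin p → MvPolynomial (Fin n) K' :=
    fun i => MvPolynomial.C (MvPolynomial.coeff 0 (Qh0 i))⁻¹ * Qh0 i with hQh
  have hQc : ∀ i, MvPolynomial.coeff 0 (Qh i) = 1 := by
    intro i
    rw [hQh]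
    simp only [MvPolynomial.coeff_C_mul]
    exact inv_mul_cancel₀ (hQc0 i)
  have hQy : ∀ i, polyToPS (RingHom.id K') (Qh i) * yh i = polyToPS (RingHom.id K') (Ph i) := by
    intro i
    rw [hQh, hPh]
    simp only [map_mul]
    rw [mul_assoc, hQy0 i]
  have hPs : ∀ i, ∀ m ∈ (Ph i).support, ∀ k, m k ≠ 0 → k ∈ J i := by
    intro i m hm
    apply hPs0 i
    rw [MvPolynomial.mem_support_iff] at hm ⊢
    intro h0
    apply hm
    rw [hPh]
    simp only [MvPolynomial.coeff_C_mul, h0, mul_zero]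
  have hQs : ∀ i, ∀ m ∈ (Qh i).support, ∀ k, m k ≠ 0 → k ∈ J i := by
    intro i m hm
    apply hQs0 i
    rw [MvPolynomial.mem_support_iff] at hm ⊢
    intro h0
    apply hm
    rw [hQh]
    simp only [MvPolynomial.coeff_C_mul, h0, mul_zero]
  -- bound on monomials
  set M : Fin n →₀ ℕ := ∑ i : Fin p, ((Ph i).support.sum id + (Qh i).support.sum id) with hM
  have hsumle : ∀ i : Fin p,
      (Ph i).support.sum id + (Qh i).support.sum id ≤ M := by
    intro i
    rw [hM]
    exact Finset.single_le_sum (f := fun i => (Ph i).support.sum id + (Qh i).support.sum id)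
      (fun _ _ => zero_le) (Finset.mem_univ i)
  have hPle : ∀ i, ∀ m ∈ (Ph i).support, m ≤ M := by
    intro i m hm
    calc m = id m := rfl
    _ ≤ (Ph i).support.sum id := Finset.single_le_sum (fun _ _ => zero_le) hm
    _ ≤ (Ph i).support.sum id + (Qh i).support.sum id := le_add_of_nonneg_right (zero_le)
    _ ≤ M := hsumle i
  have hQle : ∀ i, ∀ m ∈ (Qh i).support, m ≤ M := by
    intro i m hm
    calc m = id m := rfl
    _ ≤ (Qh i).support.sum id := Finset.single_le_sum (fun _ _ => zero_le) hm
    _ ≤ (Ph i).support.sum id + (Qh i).support.sum id := le_add_of_nonneg_left (zero_le)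
    _ ≤ M := hsumle i
  have hmem0 : (0 : Fin n →₀ ℕ) ∈ Finset.Iic M := Finset.mem_Iic.2 (zero_le)
  -- orders
  set d : Fin p → ℕ∞ := fun i => mvOrder (yh i) with hd
  have hQhconst : ∀ i, MvPowerSeries.constantCoeff
      (polyToPS (RingHom.id K') (Qh i)) ≠ 0 := by
    intro i
    rw [constantCoeff_polyToPS, RingHom.id_apply, hQc i]
    exact one_ne_zero
  have hdeq : ∀ i, d i = mvOrder (polyToPS (RingHom.id K') (Ph i)) := by
    intro i
    rw [hd]
    exact mvOrder_eq_of_mul (hQhconst i) (hQy i)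
  -- support predicate and degree bound
  set g : Fin p → (Fin n →₀ ℕ) → Prop := fun i m => ∀ k, m k ≠ 0 → k ∈ J i with hg
  have hg0 : ∀ i, g i 0 := by
    intro i
    rw [hg]
    intro k hk
    simp at hk
  set D : Fin q → ℕ := fun j => (f j).support.sup tot with hDdef
  have hDle : ∀ j, ∀ m ∈ (f j).support, ∀ i, m i ≤ D j := by
    intro j m hm i
    calc m i ≤ tot m := apply_le_tot m i
    _ ≤ D j := Finset.le_sup hm
  -- generic polynomials
  set Pg : Fin p → MvPolynomial (Fin n)
      (MvPolynomial (Fin 3 × Fin p × {x // x ∈ Finset.Iic M}) K) :=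
    fun i => mkPoly (Finset.Iic M) (g i) (fun m => MvPolynomial.X (0, i, m)) with hPgen
  set Qg : Fin p → MvPolynomial (Fin n)
      (MvPolynomial (Fin 3 × Fin p × {x // x ∈ Finset.Iic M}) K) :=
    fun i => mkPoly (Finset.Iic M) (g i) (fun m => MvPolynomial.X (1, i, m)) with hQgen
  set G : Fin q → MvPolynomial (Fin n)
      (MvPolynomial (Fin 3 × Fin p × {x // x ∈ Finset.Iic M}) K) :=
    fun j => genG (f j).support (fun m => MvPolynomial.map MvPolynomial.C (A j m))
      (fun m => MvPolynomial.map MvPolynomial.C (B j m)) Pg Qg (D j) with hG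
  have hmapG : ∀ (z : (Fin 3 × Fin p × {x // x ∈ Finset.Iic M}) → K') (j : Fin q),
      MvPolynomial.map (MvPolynomial.eval₂Hom φ z) (G j) =
        genG (f j).support (fun m => MvPolynomial.map φ (A j m))
          (fun m => MvPolynomial.map φ (B j m))
          (fun i => mkPoly (Finset.Iic M) (g i) (fun m => z (0, i, m)))
          (fun i => mkPoly (Finset.Iic M) (g i) (fun m => z (1, i, m))) (D j) := by
    intro z j
    rw [hG, map_genG_s12]
    have e1 : (fun m => MvPolynomial.map (MvPolynomial.eval₂Hom φ z)
        (MvPolynomial.map MvPolynomial.C (A j m))) = fun m => MvPolynomial.map φ (A j m) := by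
      funext m
      exact map_eval₂Hom_map_C φ z (A j m)
    have e2 : (fun m => MvPolynomial.map (MvPolynomial.eval₂Hom φ z)
        (MvPolynomial.map MvPolynomial.C (B j m))) = fun m => MvPolynomial.map φ (B j m) := by
      funext m
      exact map_eval₂Hom_map_C φ z (B j m)
    have e3 : (fun i => MvPolynomial.map (MvPolynomial.eval₂Hom φ z) (Pg i)) =
        fun i => mkPoly (Finset.Iic M) (g i) (fun m => z (0, i, m)) := by
      funext i
      rw [hPgen]
      rw [map_mkPoly]
      simp only [MvPolynomial.eval₂Hom_X']
    have e4 : (fun i => MvPolynomial.map (MvPolynomial.eval₂Hom φ z) (Qg i)) =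
        fun i => mkPoly (Finset.Iic M) (g i) (fun m => z (1, i, m)) := by
      funext i
      rw [hQgen]
      rw [map_mkPoly]
      simp only [MvPolynomial.eval₂Hom_X']
    rw [e1, e2, e3, e4]
  -- the system of equations
  set E : (Fin q × (Fin n →₀ ℕ)) ⊕ ((Fin p × {x // x ∈ Finset.Iic M}) ⊕ (Fin p ⊕ Fin p)) →
      MvPolynomial (Fin 3 × Fin p × {x // x ∈ Finset.Iic M}) K :=
    Sum.elim (fun jm => MvPolynomial.coeff jm.2 (G jm.1))
      (Sum.elim
        (fun im => if ((tot (↑im.2 : Fin n →₀ ℕ) : ℕ∞) < d im.1) then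
            MvPolynomial.X (0, im.1, im.2) else 0)
        (Sum.elim
          (fun i => MvPolynomial.X ((1 : Fin 3), i, (⟨0, hmem0⟩ : {x // x ∈ Finset.Iic M})) - 1)
          (fun i => if d i = ⊤ then 0 else
            (∑ m ∈ (Finset.Iic M).attach,
              if ((tot (↑m : Fin n →₀ ℕ) : ℕ∞) = d i ∧ g i ↑m)
              then MvPolynomial.X ((0 : Fin 3), i, m) * MvPolynomial.X ((2 : Fin 3), i, m)
              else 0) - 1))) with hE
  -- auxiliary witnesses for the order equations
  have hwex : ∀ i, ∃ w : {x // x ∈ Finset.Iic M} → K', d i ≠ ⊤ →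
      (∑ m ∈ (Finset.Iic M).attach,
        if ((tot (↑m : Fin n →₀ ℕ) : ℕ∞) = d i ∧ g i ↑m)
        then MvPolynomial.coeff (↑m) (Ph i) * w m else 0) = 1 := by
    intro i
    by_cases hdi : d i = ⊤
    · exact ⟨fun _ => 0, fun h => absurd hdi h⟩
    · obtain ⟨δ, hδ⟩ := WithTop.ne_top_iff_exists.1 hdi
      have hδ' : ((δ : ℕ) : ℕ∞) = d i := by exact_mod_cast hδ
      have hord : mvOrder (polyToPS (RingHom.id K') (Ph i)) = ((δ : ℕ) : ℕ∞) := by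
        rw [← hdeq i, ← hδ']
      obtain ⟨m₀, hm₀tot, hm₀ne⟩ := exists_tot_eq_of_mvOrder_coe hord
      rw [coeff_polyToPS, RingHom.id_apply] at hm₀ne
      have hm₀supp : m₀ ∈ (Ph i).support := MvPolynomial.mem_support_iff.2 hm₀ne
      have hm₀M : m₀ ∈ Finset.Iic M := Finset.mem_Iic.2 (hPle i m₀ hm₀supp)
      set wf : {x // x ∈ Finset.Iic M} → K' :=
        fun m => if (↑m : Fin n →₀ ℕ) = m₀ then (MvPolynomial.coeff m₀ (Ph i))⁻¹ else 0 with hwf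
      have hwfval : ∀ b : {x // x ∈ Finset.Iic M},
          wf b = if (↑b : Fin n →₀ ℕ) = m₀ then (MvPolynomial.coeff m₀ (Ph i))⁻¹ else 0 :=
        fun b => by rw [hwf]
      refine ⟨wf, fun _ => ?_⟩
      rw [Finset.sum_eq_single (⟨m₀, hm₀M⟩ : {x // x ∈ Finset.Iic M})]
      · have hcond : ((tot (m₀ : Fin n →₀ ℕ) : ℕ) : ℕ∞) = d i ∧ g i m₀ :=
          ⟨by rw [hm₀tot]; exact hδ', hPs i m₀ hm₀supp⟩
        have hco : ((⟨m₀, hm₀M⟩ : {x // x ∈ Finset.Iic M}) : Fin n →₀ ℕ) = m₀ := rfl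
        rw [if_pos, hwfval, hco, if_pos rfl]
        · exact mul_inv_cancel₀ hm₀ne
        · rw [hco]
          exact hcond
      · intro b _ hb
        have hbne : (↑b : Fin n →₀ ℕ) ≠ m₀ := fun h => hb (Subtype.ext h)
        rw [hwfval, if_neg hbne, mul_zero, ite_self]
      · intro h
        exact absurd (Finset.mem_attach _ _) h
  choose w hw using hwex
  -- the solution over K'
  set zh : (Fin 3 × Fin p × {x // x ∈ Finset.Iic M}) → K' := fun s =>
    if s.1 = 0 then MvPolynomial.coeff (↑s.2.2) (Ph s.2.1)
    else if s.1 = 1 then MvPolynomial.coeff (↑s.2.2) (Qh s.2.1)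
    else w s.2.1 s.2.2 with hzh
  have hzh0 : ∀ i m, zh (0, i, m) = MvPolynomial.coeff (↑m) (Ph i) := by
    intro i m
    rw [hzh]
    rfl
  have hzh1 : ∀ i m, zh (1, i, m) = MvPolynomial.coeff (↑m) (Qh i) := by
    intro i m
    rw [hzh]
    rfl
  have hzh2 : ∀ i m, zh (2, i, m) = w i m := by
    intro i m
    rw [hzh]
    rfl
  -- the hat tuple solves the system
  have hhat : ∀ e, MvPolynomial.eval₂ φ zh (E e) = 0 := by
    rintro (⟨j, μ⟩ | (⟨i, m⟩ | (i | i)))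
    · rw [hE]
      simp only [Sum.elim_inl]
      have h1 : MvPolynomial.eval₂ φ zh (MvPolynomial.coeff μ (G j)) =
          MvPolynomial.coeff μ (MvPolynomial.map (MvPolynomial.eval₂Hom φ zh) (G j)) := by
        rw [MvPolynomial.coeff_map, MvPolynomial.coe_eval₂Hom]
      rw [h1, hmapG zh j]
      have hPc : (fun i => mkPoly (Finset.Iic M) (g i) (fun m => zh (0, i, m))) = Ph := by
        funext i
        have hv : (fun m : {x // x ∈ Finset.Iic M} => zh (0, i, m)) =
            fun m : {x // x ∈ Finset.Iic M} => MvPolynomial.coeff (↑m : Fin n →₀ ℕ) (Ph i) :=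
          funext (hzh0 i)
        rw [hv]
        exact mkPoly_eq_self (Ph i) (fun m hm => Finset.mem_Iic.2 (hPle i m hm)) (hPs i)
      have hQcc : (fun i => mkPoly (Finset.Iic M) (g i) (fun m => zh (1, i, m))) = Qh := by
        funext i
        have hv : (fun m : {x // x ∈ Finset.Iic M} => zh (1, i, m)) =
            fun m : {x // x ∈ Finset.Iic M} => MvPolynomial.coeff (↑m : Fin n →₀ ℕ) (Qh i) :=
          funext (hzh1 i)
        rw [hv]
        exact mkPoly_eq_self (Qh i) (fun m hm => Finset.mem_Iic.2 (hQle i m hm)) (hQs i)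
      rw [hPc, hQcc]
      have hzero : genG (f j).support (fun m => MvPolynomial.map φ (A j m))
          (fun m => MvPolynomial.map φ (B j m)) Ph Qh (D j) = 0 := by
        rw [core' (f j).support (fun m => MvPolynomial.coeff m (f j))
          (fun m => MvPolynomial.map φ (A j m)) (fun m => MvPolynomial.map φ (B j m))
          (fun m _ => by
            rw [MvPolynomial.coeff_map]
            exact hφne _ (hB0 j m))
          (fun m _ => by
            rw [polyToPS_map, polyToPS_map]
            exact hAB j m)
          Ph Qh yh hQy (fun i => by rw [hQc i]; exact one_ne_zero) (D j) (hDle j)]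
        rw [← MvPolynomial.eval_eq']
        exact hsol j
      rw [hzero, MvPolynomial.coeff_zero]
    · rw [hE]
      simp only [Sum.elim_inr, Sum.elim_inl]
      by_cases hc : ((tot (↑m : Fin n →₀ ℕ) : ℕ) : ℕ∞) < d i
      · rw [if_pos hc, MvPolynomial.eval₂_X, hzh0]
        have h2 := coeff_eq_zero_of_lt_mvOrder
          (y := polyToPS (RingHom.id K') (Ph i)) (m := (↑m : Fin n →₀ ℕ))
          (by rw [← hdeq i]; exact hc)
        rw [coeff_polyToPS, RingHom.id_apply] at h2
        exact h2
      · rw [if_neg hc, MvPolynomial.eval₂_zero]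
    · rw [hE]
      simp only [Sum.elim_inr, Sum.elim_inl]
      rw [MvPolynomial.eval₂_sub, MvPolynomial.eval₂_X, MvPolynomial.eval₂_one, hzh1]
      have hc1 : MvPolynomial.coeff ((⟨0, hmem0⟩ : {x // x ∈ Finset.Iic M}) : Fin n →₀ ℕ)
          (Qh i) = 1 := hQc i
      rw [hc1]
      ring
    · rw [hE]
      simp only [Sum.elim_inr]
      by_cases hdi : d i = ⊤
      · rw [if_pos hdi, MvPolynomial.eval₂_zero]
      · rw [if_neg hdi]
        rw [MvPolynomial.eval₂_sub, MvPolynomial.eval₂_one]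
        rw [← MvPolynomial.coe_eval₂Hom, map_sum]
        have hterm : ∀ m ∈ (Finset.Iic M).attach,
            (MvPolynomial.eval₂Hom φ zh)
              (if ((tot (↑m : Fin n →₀ ℕ) : ℕ∞) = d i ∧ g i ↑m)
               then MvPolynomial.X ((0 : Fin 3), i, m) * MvPolynomial.X ((2 : Fin 3), i, m)
               else 0) =
            (if ((tot (↑m : Fin n →₀ ℕ) : ℕ∞) = d i ∧ g i ↑m)
             then MvPolynomial.coeff (↑m) (Ph i) * w i m else 0) := by
          intro m _
          rw [apply_ite (MvPolynomial.eval₂Hom φ zh), map_mul, map_zero,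
            MvPolynomial.eval₂Hom_X', MvPolynomial.eval₂Hom_X', hzh0, hzh2]
        rw [Finset.sum_congr rfl hterm, hw i hdi]
        ring
  -- transfer to K
  obtain ⟨z, hz⟩ := alg_pure φ E ⟨zh, hhat⟩
  -- reconstruct the solution over K
  set P : Fin p → MvPolynomial (Fin n) K :=
    fun i => mkPoly (Finset.Iic M) (g i) (fun m => z (0, i, m)) with hP
  set Q : Fin p → MvPolynomial (Fin n) K :=
    fun i => mkPoly (Finset.Iic M) (g i) (fun m => z (1, i, m)) with hQdef
  have hQ0 : ∀ i, MvPolynomial.coeff 0 (Q i) = 1 := by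
    intro i
    have h3 := hz (Sum.inr (Sum.inr (Sum.inl i)))
    rw [hE] at h3
    simp only [Sum.elim_inr, Sum.elim_inl] at h3
    rw [map_sub, MvPolynomial.eval_X, map_one, sub_eq_zero] at h3
    have hc : MvPolynomial.coeff (0 : Fin n →₀ ℕ)
        (mkPoly (Finset.Iic M) (g i) (fun m => z (1, i, m))) = z (1, i, ⟨0, hmem0⟩) :=
      coeff_mkPoly_of_mem (T := Finset.Iic M) (g := g i)
        (fun m => z (1, i, m)) ⟨0, hmem0⟩ (hg0 i)
    rw [hQdef, hc]
    exact h3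
  have hQconst : ∀ i, MvPowerSeries.constantCoeff (polyToPS φ (Q i)) ≠ 0 := by
    intro i
    rw [constantCoeff_polyToPS, hQ0 i, map_one]
    exact one_ne_zero
  set y : Fin p → MvPowerSeries (Fin n) K' :=
    fun i => polyToPS φ (P i) * (polyToPS φ (Q i))⁻¹ with hydef
  have hy : ∀ i, polyToPS φ (Q i) * y i = polyToPS φ (P i) := by
    intro i
    rw [hydef]
    calc polyToPS φ (Q i) * (polyToPS φ (P i) * (polyToPS φ (Q i))⁻¹)
        = polyToPS φ (Q i) * (polyToPS φ (Q i))⁻¹ * polyToPS φ (P i) := by ring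
      _ = polyToPS φ (P i) := by
          rw [MvPowerSeries.mul_inv_cancel _ (hQconst i), one_mul]
  -- coefficient facts about P
  have hPcoeff_zero : ∀ i (μ : Fin n →₀ ℕ), ((tot μ : ℕ) : ℕ∞) < d i →
      MvPolynomial.coeff μ (P i) = 0 := by
    intro i μ hμ
    by_cases hμM : μ ∈ Finset.Iic M
    · by_cases hgμ : g i μ
      · have h2 := hz (Sum.inr (Sum.inl (i, ⟨μ, hμM⟩)))
        rw [hE] at h2
        simp only [Sum.elim_inr, Sum.elim_inl] at h2
        rw [if_pos hμ, MvPolynomial.eval_X] at h2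
        rw [hP]
        have hc := coeff_mkPoly_of_mem (T := Finset.Iic M) (g := g i)
          (fun m => z (0, i, m)) ⟨μ, hμM⟩ hgμ
        rw [hc]
        exact h2
      · rw [hP]
        exact coeff_mkPoly_eq_zero _ (Or.inr hgμ)
    · rw [hP]
      exact coeff_mkPoly_eq_zero _ (Or.inl hμM)
  -- the equations hold over K'
  have hgenK' : ∀ j, genG (f j).support (fun m => MvPolynomial.map φ (A j m))
      (fun m => MvPolynomial.map φ (B j m)) (fun i => MvPolynomial.map φ (P i))
      (fun i => MvPolynomial.map φ (Q i)) (D j) = 0 := by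
    intro j
    have hmap : MvPolynomial.map (MvPolynomial.eval₂Hom φ (fun s => φ (z s))) (G j) =
        genG (f j).support (fun m => MvPolynomial.map φ (A j m))
          (fun m => MvPolynomial.map φ (B j m)) (fun i => MvPolynomial.map φ (P i))
          (fun i => MvPolynomial.map φ (Q i)) (D j) := by
      rw [hmapG (fun s => φ (z s)) j]
      have e5 : (fun i => mkPoly (Finset.Iic M) (g i)
          (fun m => φ (z ((0 : Fin 3), i, m)))) = fun i => MvPolynomial.map φ (P i) := by
        funext i
        rw [hP, map_mkPoly]
      have e6 : (fun i => mkPoly (Finset.Iic M) (g i)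
          (fun m => φ (z ((1 : Fin 3), i, m)))) = fun i => MvPolynomial.map φ (Q i) := by
        funext i
        rw [hQdef, map_mkPoly]
      rw [e5, e6]
    rw [← hmap]
    apply MvPolynomial.ext
    intro μ
    rw [MvPolynomial.coeff_map, MvPolynomial.coeff_zero, MvPolynomial.coe_eval₂Hom]
    have h4 : φ (MvPolynomial.eval z (MvPolynomial.coeff μ (G j))) =
        MvPolynomial.eval₂ φ (fun s => φ (z s)) (MvPolynomial.coeff μ (G j)) := by
      rw [← MvPolynomial.eval₂_id (g := z), MvPolynomial.eval₂_comp_left φ (RingHom.id K) z,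
        RingHom.comp_id]
      rfl
    rw [← h4]
    have h5 := hz (Sum.inl (j, μ))
    rw [hE] at h5
    simp only [Sum.elim_inl] at h5
    rw [h5, map_zero]
  have hfy : ∀ j, MvPolynomial.eval y (f j) = 0 := by
    intro j
    rw [MvPolynomial.eval_eq']
    have hcore := core' (f j).support (fun m => MvPolynomial.coeff m (f j))
      (fun m => MvPolynomial.map φ (A j m)) (fun m => MvPolynomial.map φ (B j m))
      (fun m _ => by
        rw [MvPolynomial.coeff_map]
        exact hφne _ (hB0 j m))
      (fun m _ => by
        rw [polyToPS_map, polyToPS_map]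
        exact hAB j m)
      (fun i => MvPolynomial.map φ (P i)) (fun i => MvPolynomial.map φ (Q i)) y
      (fun i => by rw [polyToPS_map, polyToPS_map]; exact hy i)
      (fun i => by
        rw [MvPolynomial.coeff_map, hQ0 i, map_one]
        exact one_ne_zero)
      (D j) (hDle j)
    exact hcore.1 (hgenK' j)
  -- orders agree
  have hordy : ∀ i, mvOrder (y i) = d i := by
    intro i
    have h1 : mvOrder (y i) = mvOrder (polyToPS φ (P i)) :=
      mvOrder_eq_of_mul (hQconst i) (hy i)
    rw [h1]
    by_cases hdi : d i = ⊤
    · rw [hdi]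
      have hPz : P i = 0 := by
        apply MvPolynomial.ext
        intro μ
        rw [MvPolynomial.coeff_zero]
        exact hPcoeff_zero i μ (by rw [hdi]; exact WithTop.coe_lt_top _)
      rw [hPz, map_zero, mvOrder_zero]
    · obtain ⟨δ, hδ⟩ := WithTop.ne_top_iff_exists.1 hdi
      have hδ' : ((δ : ℕ) : ℕ∞) = d i := by exact_mod_cast hδ
      rw [← hδ']
      apply mvOrder_eq_coe
      · intro μ hμ
        rw [coeff_polyToPS, hPcoeff_zero i μ (by rw [← hδ']; exact_mod_cast hμ), map_zero]
      · have h4 := hz (Sum.inr (Sum.inr (Sum.inr i)))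
        rw [hE] at h4
        simp only [Sum.elim_inr] at h4
        rw [if_neg hdi, map_sub, map_one, sub_eq_zero, map_sum] at h4
        have hterm : ∀ m ∈ (Finset.Iic M).attach,
            (MvPolynomial.eval z)
              (if ((tot (↑m : Fin n →₀ ℕ) : ℕ∞) = d i ∧ g i ↑m)
               then MvPolynomial.X ((0 : Fin 3), i, m) * MvPolynomial.X ((2 : Fin 3), i, m)
               else 0) =
            (if ((tot (↑m : Fin n →₀ ℕ) : ℕ∞) = d i ∧ g i ↑m)
             then z (0, i, m) * z (2, i, m) else 0) := by
          intro m _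
          rw [apply_ite (MvPolynomial.eval z), map_mul, map_zero,
            MvPolynomial.eval_X, MvPolynomial.eval_X]
        rw [Finset.sum_congr rfl hterm] at h4
        have hex : ∃ m ∈ (Finset.Iic M).attach,
            ((tot (↑m : Fin n →₀ ℕ) : ℕ∞) = d i ∧ g i ↑m) ∧ z (0, i, m) ≠ 0 := by
          by_contra hcon
          push_neg at hcon
          have h0 : (∑ m ∈ (Finset.Iic M).attach,
              if ((tot (↑m : Fin n →₀ ℕ) : ℕ∞) = d i ∧ g i ↑m)
              then z (0, i, m) * z (2, i, m) else 0) = 0 := by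
            refine Finset.sum_eq_zero fun m hm => ?_
            by_cases hc : ((tot (↑m : Fin n →₀ ℕ) : ℕ∞) = d i ∧ g i ↑m)
            · rw [if_pos hc, hcon m hm hc, zero_mul]
            · rw [if_neg hc]
          rw [h4] at h0
          exact one_ne_zero h0
        obtain ⟨m, _, ⟨htotm, hgm⟩, hzm⟩ := hex
        refine ⟨↑m, ?_, ?_⟩
        · have : ((tot (↑m : Fin n →₀ ℕ) : ℕ) : ℕ∞) = ((δ : ℕ) : ℕ∞) := by
            rw [htotm, ← hδ']
          exact_mod_cast this
        · rw [coeff_polyToPS]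
          have hc := coeff_mkPoly_of_mem (T := Finset.Iic M) (g := g i)
            (fun m => z (0, i, m)) m hgm
          rw [hP, hc]
          exact hφne _ hzm
  -- conclude
  refine ⟨y, fun i => ⟨P i, Q i, ?_, ?_, ?_, hy i⟩, hfy, hordy⟩
  · intro m hm k hk
    by_contra hkJ
    have hgm : ¬ g i m := fun hgm => hkJ (hgm k hk)
    rw [MvPolynomial.mem_support_iff, hP] at hm
    exact hm (coeff_mkPoly_eq_zero _ (Or.inr hgm))
  · intro m hm k hk
    by_contra hkJ
    have hgm : ¬ g i m := fun hgm => hkJ (hgm k hk)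
    rw [MvPolynomial.mem_support_iff, hQdef] at hm
    exact hm (coeff_mkPoly_eq_zero _ (Or.inr hgm))
  · rw [hQ0 i]
    exact one_ne_zero
end
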